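/- arXiv:2201.03901 — 8 statements merged into one kernel-verified Lean document; each statement's English description precedes it below -/
import Mathlib

section
/- Let Φ be an epimorphism from a thick projective plane P onto a thin projective plane Δ of order (1,1) (i.e. an ordinary triangle). Then for every line L of P, Φ maps the set of points incident with L onto the set of points incident with Φ(L). -/
/-- A point-line incidence geometry. -/
structure IncGeom where
  P : Type
  L : Type
  I : P → L → Prop

namespace IncGeom

variable (G : IncGeom)

/-- The bipartite incidence graph on points and lines. -/
def incGraph : SimpleGraph (G.P ⊕ G.L) where
  Adj x y :=
    (∃ p l, x = Sum.inl p ∧ y = Sum.inr l ∧ G.I p l) ∨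
    (∃ p l, x = Sum.inr l ∧ y = Sum.inl p ∧ G.I p l)
  symm := by
    constructor
    rintro x y (⟨p, l, rfl, rfl, h⟩ | ⟨p, l, rfl, rfl, h⟩)
    · exact Or.inr ⟨p, l, rfl, rfl, h⟩
    · exact Or.inl ⟨p, l, rfl, rfl, h⟩
  loopless := by
    constructor
    rintro x (⟨p, l, h1, h2, _⟩ | ⟨p, l, h1, h2, _⟩) <;> subst h1 <;> simp_all

/-- A weak generalized `n`-gon: the incidence graph has diameter `n` and girth `2n`. -/
def IsWeakGenPolygon (n : ℕ) : Prop :=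
  G.incGraph.ediam = (n : ℕ∞) ∧ G.incGraph.egirth = ((2 * n : ℕ) : ℕ∞)

/-- Thick: every point is on at least 3 lines and every line carries at least 3 points. -/
def Thick : Prop :=
  (∀ p : G.P, ∃ l₁ l₂ l₃ : G.L, l₁ ≠ l₂ ∧ l₁ ≠ l₃ ∧ l₂ ≠ l₃ ∧ G.I p l₁ ∧ G.I p l₂ ∧ G.I p l₃) ∧
  (∀ l : G.L, ∃ p₁ p₂ p₃ : G.P, p₁ ≠ p₂ ∧ p₁ ≠ p₃ ∧ p₂ ≠ p₃ ∧ G.I p₁ l ∧ G.I p₂ l ∧ G.I p₃ l)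

/-- A (thick) generalized `n`-gon. -/
def IsGenPolygon (n : ℕ) : Prop := G.IsWeakGenPolygon n ∧ G.Thick

/-- The geometry has order `(u,v)`: every line has `u+1` points, every point is on `v+1` lines. -/
def HasOrder (u v : ℕ) : Prop :=
  (∀ l : G.L, {p : G.P | G.I p l}.ncard = u + 1) ∧
  (∀ p : G.P, {l : G.L | G.I p l}.ncard = v + 1)

/-- Two points are collinear if some line is incident with both. -/
def Collin (p q : G.P) : Prop := ∃ l, G.I p l ∧ G.I q l

/-- Generalized quadrangle axioms. -/
def IsGQ : Prop :=
  (∀ p q : G.P, p ≠ q → ∀ l m : G.L, G.I p l → G.I q l → G.I p m → G.I q m → l = m) ∧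
  (∀ (p : G.P) (l : G.L), ¬ G.I p l → ∃! q : G.P, G.I q l ∧ G.Collin p q)

end IncGeom

/-- A morphism of incidence geometries. -/
structure IncMor (G G' : IncGeom) where
  fP : G.P → G'.P
  fL : G.L → G'.L
  inc : ∀ p l, G.I p l → G'.I (fP p) (fL l)

/-- An epimorphism: surjective on points and on lines. -/
def IncMor.IsEpi {G G' : IncGeom} (α : IncMor G G') : Prop :=
  Function.Surjective α.fP ∧ Function.Surjective α.fL

namespace IncGeom

open SimpleGraph

variable {G : IncGeom}

@[simp]
lemma incGraph_adj_inl_inr {p : G.P} {l : G.L} : G.incGraph.Adj (.inl p) (.inr l) ↔ G.I p l := by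
  simp [incGraph]

@[simp]
lemma incGraph_adj_inr_inl {p : G.P} {l : G.L} : G.incGraph.Adj (.inr l) (.inl p) ↔ G.I p l := by
  simp [incGraph]

@[simp]
lemma not_incGraph_adj_inr_inr {l m : G.L} : ¬ G.incGraph.Adj (.inr l) (.inr m) := by
  simp [incGraph]

variable (G) in
def incGraphColoring : G.incGraph.Coloring Bool :=
  Coloring.mk Sum.isLeft fun {x y} h => by
    rcases h with ⟨p, l, rfl, rfl, -⟩ | ⟨p, l, rfl, rfl, -⟩ <;> simp

lemma exists_inter_of_edist_le_three {l m : G.L} (hlm : l ≠ m)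
    (h : G.incGraph.edist (.inr l) (.inr m) ≤ 3) : ∃ p, G.I p l ∧ G.I p m := by
  have hfin : G.incGraph.edist (.inr l) (.inr m) ≠ ⊤ := ne_top_of_le_ne_top (by simp) h
  obtain ⟨w, hw⟩ := exists_walk_of_edist_ne_top hfin
  have heven : Even w.length := (G.incGraphColoring.even_length_iff_congr w).mpr Iff.rfl
  have hne_zero : w.length ≠ 0 := fun h0 => hlm (Sum.inr.inj (w.eq_of_length_eq_zero h0))
  have hle : w.length ≤ 3 := by exact_mod_cast hw ▸ h
  have htwo : w.length = 2 := by
    obtain ⟨k, hk⟩ := heven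
    omega
  have hdist : G.incGraph.edist (.inr l) (.inr m) = 2 := by rw [← hw, htwo]; rfl
  obtain ⟨-, -, x, hxl, hxm⟩ := edist_eq_two_iff.mp hdist
  rcases x with p | _
  · exact ⟨p, by simpa using hxl, by simpa using hxm⟩
  · simp at hxl

lemma exists_inter_of_ediam_le_three (h : G.incGraph.ediam ≤ 3) {l m : G.L} (hlm : l ≠ m) :
    ∃ p, G.I p l ∧ G.I p m :=
  exists_inter_of_edist_le_three hlm (edist_le_ediam.trans h)

lemma eq_of_incident_of_four_lt_egirth (hg : 4 < G.incGraph.egirth) {p q : G.P} {l m : G.L}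
    (hpq : p ≠ q) (hpl : G.I p l) (hql : G.I q l) (hpm : G.I p m) (hqm : G.I q m) : l = m := by
  by_contra hlm
  let c : G.incGraph.Walk (.inl p) (.inl p) :=
    .cons (incGraph_adj_inl_inr.mpr hpl) <| .cons (incGraph_adj_inr_inl.mpr hql) <|
      .cons (incGraph_adj_inl_inr.mpr hqm) <| .cons (incGraph_adj_inr_inl.mpr hpm) .nil
  have hc : c.IsCycle := by
    simp [c, Walk.cons_isCycle_iff, Walk.cons_isPath_iff, hpq, hlm, Ne.symm hpq]
  exact (egirth_le_length hc).not_gt hg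

end IncGeom

/-- An epimorphism from a thick projective plane onto the thin plane of order (1,1)
maps each point row onto the point row of the image line. -/
theorem stmt_1 (P Δ : IncGeom)
    (hP : P.IsGenPolygon 3)
    (hΔ : Δ.IsWeakGenPolygon 3) (hΔord : Δ.HasOrder 1 1)
    (Φ : IncMor P Δ) (hepi : Φ.IsEpi) :
    ∀ L : P.L, Φ.fP '' {p : P.P | P.I p L} = {p' : Δ.P | Δ.I p' (Φ.fL L)} := by
  intro L
  refine Set.Subset.antisymm (Set.image_subset_iff.mpr fun p hp => Φ.inc p L hp) fun c hc => ?_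
  by_contra hmiss
  -- `c` lies on a second line `m`; a preimage `W` of `m` meets `L` in `z`, and then `Φ z ≠ c`
  -- and `c` both lie on the distinct lines `Φ L` and `m`, a digon in the triangle.
  obtain ⟨m, hcm, hmL⟩ := Set.exists_ne_of_one_lt_ncard (by rw [hΔord.2 c]; norm_num) (Φ.fL L)
  obtain ⟨W, rfl⟩ := hepi.2 m
  obtain ⟨z, hzW, hzL⟩ := P.exists_inter_of_ediam_le_three hP.1.1.le fun h => hmL (congrArg Φ.fL h)
  have hzc : Φ.fP z ≠ c := fun h => hmiss ⟨z, hzL, h⟩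
  have hgirth : 4 < Δ.incGraph.egirth := by rw [hΔ.2]; decide
  exact hmL (Δ.eq_of_incident_of_four_lt_egirth hgirth hzc
    (Φ.inc z W hzW) hcm (Φ.inc z L hzL) hc)
end

section
/- Let P be a finite projective plane of order n, and suppose the point set of P is partitioned into three nonempty sets A, B, C such that every line of P meets A in 0 or α points, meets B in 0 or β points, and meets C in 0 or γ points, where each of A, B, C meets some line and misses some line, and every line meets exactly two of the three sets. Then α = β = γ = (n+1)/2, and in particular n is odd. -/
/-!
A line missing `A` meets both `B` and `C`, since it meets exactly two of the three sets, so
it carries `β + γ` points: `β + γ = n + 1`. Likewise `α + γ = α + β = n + 1`, which forces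
`α = β = γ` and `n + 1 = 2α`.
-/

/-- A finite projective plane of order n. -/
structure FinProjPlane (n : ℕ) where
  P : Type
  L : Type
  I : P → L → Prop
  finP : Finite P
  finL : Finite L
  join : ∀ p q : P, p ≠ q → ∃! l : L, I p l ∧ I q l
  meet : ∀ l m : L, l ≠ m → ∃! p : P, I p l ∧ I p m
  line_card : ∀ l : L, {p : P | I p l}.ncard = n + 1
  point_card : ∀ p : P, {l : L | I p l}.ncard = n + 1

theorem Set.ncard_inter_add_ncard_inter_add_ncard_inter {α : Type*} {s A B C : Set α}
    (hs : s.Finite) (hAB : Disjoint A B) (hAC : Disjoint A C) (hBC : Disjoint B C)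
    (hcover : A ∪ B ∪ C = Set.univ) :
    (s ∩ A).ncard + (s ∩ B).ncard + (s ∩ C).ncard = s.ncard := by
  have hsplit : s = s ∩ A ∪ s ∩ B ∪ s ∩ C := by
    rw [← Set.inter_union_distrib_left, ← Set.inter_union_distrib_left, hcover,
      Set.inter_univ]
  have hAB' : Disjoint (s ∩ A) (s ∩ B) :=
    hAB.mono Set.inter_subset_right Set.inter_subset_right
  have hABC' : Disjoint (s ∩ A ∪ s ∩ B) (s ∩ C) :=
    (hAC.union_left hBC).mono (Set.union_subset_union Set.inter_subset_right
      Set.inter_subset_right) Set.inter_subset_right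
  conv_rhs => rw [hsplit]
  rw [Set.ncard_union_eq hABC' (hs.subset (Set.union_subset Set.inter_subset_left
      Set.inter_subset_left)) (hs.inter_of_left C),
    Set.ncard_union_eq hAB' (hs.inter_of_left A) (hs.inter_of_left B)]

theorem Set.Nonempty.ncard_eq_of_ncard_eq_zero_or {α : Type*} {s : Set α} {k : ℕ}
    (hne : s.Nonempty) (h : s.ncard = 0 ∨ s.ncard = k) (hs : s.Finite := by toFinite_tac) :
    s.ncard = k :=
  h.resolve_left (hne.ncard_pos hs).ne'

theorem stmt_2_general (n : ℕ) (Pl : FinProjPlane n) (A B C : Set Pl.P) (α β γ : ℕ)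
    (hdisjAB : Disjoint A B) (hdisjAC : Disjoint A C) (hdisjBC : Disjoint B C)
    (hcover : A ∪ B ∪ C = Set.univ)
    (hα : ∀ l : Pl.L, ({p | Pl.I p l} ∩ A).ncard = 0 ∨ ({p | Pl.I p l} ∩ A).ncard = α)
    (hβ : ∀ l : Pl.L, ({p | Pl.I p l} ∩ B).ncard = 0 ∨ ({p | Pl.I p l} ∩ B).ncard = β)
    (hγ : ∀ l : Pl.L, ({p | Pl.I p l} ∩ C).ncard = 0 ∨ ({p | Pl.I p l} ∩ C).ncard = γ)
    (hAm : (∃ l, ({p | Pl.I p l} ∩ A).Nonempty) ∧ ∃ l, {p | Pl.I p l} ∩ A = ∅)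
    (hBm : (∃ l, ({p | Pl.I p l} ∩ B).Nonempty) ∧ ∃ l, {p | Pl.I p l} ∩ B = ∅)
    (hCm : (∃ l, ({p | Pl.I p l} ∩ C).Nonempty) ∧ ∃ l, {p | Pl.I p l} ∩ C = ∅)
    (htwo : ∀ l : Pl.L,
      (({p | Pl.I p l} ∩ A).Nonempty ∧ ({p | Pl.I p l} ∩ B).Nonempty ∧ {p | Pl.I p l} ∩ C = ∅) ∨
      (({p | Pl.I p l} ∩ A).Nonempty ∧ ({p | Pl.I p l} ∩ C).Nonempty ∧ {p | Pl.I p l} ∩ B = ∅) ∨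
      (({p | Pl.I p l} ∩ B).Nonempty ∧ ({p | Pl.I p l} ∩ C).Nonempty ∧ {p | Pl.I p l} ∩ A = ∅)) :
    α = β ∧ β = γ ∧ n + 1 = 2 * α ∧ Odd n := by
  have : Finite Pl.P := Pl.finP
  have hline (l : Pl.L) : ({p | Pl.I p l} ∩ A).ncard + ({p | Pl.I p l} ∩ B).ncard
      + ({p | Pl.I p l} ∩ C).ncard = n + 1 :=
    (Set.ncard_inter_add_ncard_inter_add_ncard_inter (Set.toFinite _) hdisjAB hdisjAC
      hdisjBC hcover).trans (Pl.line_card l)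
  obtain ⟨lA, hlA⟩ := hAm.2
  obtain ⟨lB, hlB⟩ := hBm.2
  obtain ⟨lC, hlC⟩ := hCm.2
  obtain ⟨hBA, hCA⟩ : ({p | Pl.I p lA} ∩ B).Nonempty ∧
      ({p | Pl.I p lA} ∩ C).Nonempty := by
    simpa [hlA] using htwo lA
  obtain ⟨hAB, hCB⟩ : ({p | Pl.I p lB} ∩ A).Nonempty ∧
      ({p | Pl.I p lB} ∩ C).Nonempty := by
    simpa [hlB] using htwo lB
  obtain ⟨hAC, hBC⟩ : ({p | Pl.I p lC} ∩ A).Nonempty ∧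
      ({p | Pl.I p lC} ∩ B).Nonempty := by
    simpa [hlC] using htwo lC
  have hβγ := hline lA
  rw [hlA, Set.ncard_empty, hBA.ncard_eq_of_ncard_eq_zero_or (hβ lA),
    hCA.ncard_eq_of_ncard_eq_zero_or (hγ lA)] at hβγ
  have hαγ := hline lB
  rw [hlB, Set.ncard_empty, hAB.ncard_eq_of_ncard_eq_zero_or (hα lB),
    hCB.ncard_eq_of_ncard_eq_zero_or (hγ lB)] at hαγ
  have hαβ := hline lC
  rw [hlC, Set.ncard_empty, hAC.ncard_eq_of_ncard_eq_zero_or (hα lC),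
    hBC.ncard_eq_of_ncard_eq_zero_or (hβ lC)] at hαβ
  exact ⟨by omega, by omega, by omega, ⟨α - 1, by omega⟩⟩

/-- If the points of a finite projective plane of order n are partitioned into three
nonempty sets A, B, C with constant nonzero line-intersection sizes α, β, γ, each set
meeting some line and missed by some line, and every line meets exactly two of the
three sets, then α = β = γ = (n+1)/2 and n is odd. -/
theorem stmt_2 (n : ℕ) (Pl : FinProjPlane n) (A B C : Set Pl.P) (α β γ : ℕ)
    (hA : A.Nonempty) (hB : B.Nonempty) (hC : C.Nonempty)
    (hdisjAB : Disjoint A B) (hdisjAC : Disjoint A C) (hdisjBC : Disjoint B C)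
    (hcover : A ∪ B ∪ C = Set.univ)
    (hα : ∀ l : Pl.L, ({p | Pl.I p l} ∩ A).ncard = 0 ∨ ({p | Pl.I p l} ∩ A).ncard = α)
    (hβ : ∀ l : Pl.L, ({p | Pl.I p l} ∩ B).ncard = 0 ∨ ({p | Pl.I p l} ∩ B).ncard = β)
    (hγ : ∀ l : Pl.L, ({p | Pl.I p l} ∩ C).ncard = 0 ∨ ({p | Pl.I p l} ∩ C).ncard = γ)
    (hAm : (∃ l, ({p | Pl.I p l} ∩ A).Nonempty) ∧ ∃ l, {p | Pl.I p l} ∩ A = ∅)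
    (hBm : (∃ l, ({p | Pl.I p l} ∩ B).Nonempty) ∧ ∃ l, {p | Pl.I p l} ∩ B = ∅)
    (hCm : (∃ l, ({p | Pl.I p l} ∩ C).Nonempty) ∧ ∃ l, {p | Pl.I p l} ∩ C = ∅)
    (htwo : ∀ l : Pl.L,
      (({p | Pl.I p l} ∩ A).Nonempty ∧ ({p | Pl.I p l} ∩ B).Nonempty ∧ {p | Pl.I p l} ∩ C = ∅) ∨
      (({p | Pl.I p l} ∩ A).Nonempty ∧ ({p | Pl.I p l} ∩ C).Nonempty ∧ {p | Pl.I p l} ∩ B = ∅) ∨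
      (({p | Pl.I p l} ∩ B).Nonempty ∧ ({p | Pl.I p l} ∩ C).Nonempty ∧ {p | Pl.I p l} ∩ A = ∅)) :
    α = β ∧ β = γ ∧ n + 1 = 2 * α ∧ Odd n :=
  stmt_2_general n Pl A B C α β γ hdisjAB hdisjAC hdisjBC hcover hα hβ hγ hAm hBm hCm htwo
end

section
/- Let P be a finite projective plane of order n, let A be a nonempty set of points such that every line of P meets A in exactly 0 or exactly α points, with α ≥ 1. Then |A| = (n+1)(α−1) + 1. Moreover, if there exists a point not in A, then α divides |A|, and hence α divides n(α−1), i.e. α divides n. -/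
namespace FinProjPlane

variable {n : ℕ} (Pl : FinProjPlane n)

instance : Finite Pl.P := Pl.finP

instance : Finite Pl.L := Pl.finL

def pointsOn (l : Pl.L) : Set Pl.P := {p | Pl.I p l}

def linesThrough (x : Pl.P) : Set Pl.L := {l | Pl.I x l}

/-- `A` is a set of type `(0, α)`. -/
def IsTypeZeroOr (A : Set Pl.P) (α : ℕ) : Prop :=
  ∀ l, (Pl.pointsOn l ∩ A).ncard = 0 ∨ (Pl.pointsOn l ∩ A).ncard = α

theorem ncard_linesThrough (x : Pl.P) : (Pl.linesThrough x).ncard = n + 1 :=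
  Pl.point_card x

theorem biUnion_linesThrough_inter_sdiff (A : Set Pl.P) (x : Pl.P) :
    ⋃ l ∈ Pl.linesThrough x, (Pl.pointsOn l ∩ A) \ {x} = A \ {x} := by
  ext p
  simp only [Set.mem_iUnion, Set.mem_sdiff, Set.mem_inter_iff, Set.mem_singleton_iff, exists_prop]
  constructor
  · rintro ⟨l, -, ⟨-, hpA⟩, hpx⟩
    exact ⟨hpA, hpx⟩
  · rintro ⟨hpA, hpx⟩
    obtain ⟨l, ⟨hpl, hxl⟩, -⟩ := Pl.join p x hpx
    exact ⟨l, hxl, ⟨hpl, hpA⟩, hpx⟩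

theorem pairwiseDisjoint_linesThrough_inter_sdiff (A : Set Pl.P) (x : Pl.P) :
    (Pl.linesThrough x).PairwiseDisjoint fun l ↦ (Pl.pointsOn l ∩ A) \ {x} := by
  intro l hl m hm hlm
  refine Set.disjoint_left.mpr fun p ⟨⟨hpl, _⟩, hpx⟩ ⟨⟨hpm, _⟩, _⟩ ↦ hlm ?_
  exact (Pl.join p x hpx).unique ⟨hpl, hl⟩ ⟨hpm, hm⟩

theorem ncard_sdiff_singleton_eq_finsum (A : Set Pl.P) (x : Pl.P) :
    (A \ {x}).ncard = ∑ᶠ l ∈ Pl.linesThrough x, ((Pl.pointsOn l ∩ A) \ {x}).ncard := by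
  rw [← Pl.biUnion_linesThrough_inter_sdiff A x]
  exact (Set.toFinite _).ncard_biUnion (fun _ _ ↦ Set.toFinite _)
    (Pl.pairwiseDisjoint_linesThrough_inter_sdiff A x)

variable {Pl} {A : Set Pl.P} {α : ℕ}

theorem IsTypeZeroOr.ncard_eq_of_mem (hA : Pl.IsTypeZeroOr A α) {a : Pl.P} (ha : a ∈ A) :
    A.ncard = (n + 1) * (α - 1) + 1 := by
  have hline : ∀ l ∈ Pl.linesThrough a, ((Pl.pointsOn l ∩ A) \ {a}).ncard = α - 1 := by
    intro l hl
    have hal : a ∈ Pl.pointsOn l ∩ A := ⟨hl, ha⟩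
    have hα : (Pl.pointsOn l ∩ A).ncard = α :=
      (hA l).resolve_left ((Set.ncard_pos (Set.toFinite _)).mpr ⟨a, hal⟩).ne'
    rw [Set.ncard_sdiff_singleton_of_mem hal, hα]
  calc A.ncard = (A \ {a}).ncard + 1 := (Set.ncard_sdiff_singleton_add_one ha).symm
    _ = (∑ᶠ l ∈ Pl.linesThrough a, (α - 1) * 1) + 1 := by
      rw [Pl.ncard_sdiff_singleton_eq_finsum, finsum_mem_congr rfl hline]
      simp only [mul_one]
    _ = (n + 1) * (α - 1) + 1 := by
      rw [← mul_finsum_mem, finsum_one, ncard_linesThrough, mul_comm]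

theorem IsTypeZeroOr.dvd_ncard_of_notMem (hA : Pl.IsTypeZeroOr A α) {b : Pl.P} (hb : b ∉ A) :
    α ∣ A.ncard := by
  rw [← Set.sdiff_singleton_eq_self hb, Pl.ncard_sdiff_singleton_eq_finsum]
  refine finsum_mem_induction (α ∣ ·) (dvd_zero α) (fun _ _ ↦ dvd_add) fun l _ ↦ ?_
  rw [Set.sdiff_singleton_eq_self fun h ↦ hb h.2]
  rcases hA l with h | h <;> simp [h]

end FinProjPlane

/-- Counting a point set met by every line in 0 or α points in a finite projective
plane of order n. -/
theorem stmt_3 (n : ℕ) (Pl : FinProjPlane n) (A : Set Pl.P) (α : ℕ)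
    (hA : A.Nonempty) (hα : 1 ≤ α)
    (hconst : ∀ l : Pl.L, ({p | Pl.I p l} ∩ A).ncard = 0 ∨ ({p | Pl.I p l} ∩ A).ncard = α) :
    A.ncard = (n + 1) * (α - 1) + 1 ∧
      ((∃ p : Pl.P, p ∉ A) → α ∣ A.ncard ∧ α ∣ n) := by
  have htype : Pl.IsTypeZeroOr A α := hconst
  obtain ⟨a, ha⟩ := hA
  have hcard := htype.ncard_eq_of_mem ha
  refine ⟨hcard, fun ⟨b, hb⟩ ↦ ?_⟩
  have hdvd := htype.dvd_ncard_of_notMem hb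
  have hsum : A.ncard + n = α * (n + 1) := by
    obtain ⟨β, rfl⟩ := Nat.exists_eq_add_of_le' hα
    rw [hcard, Nat.add_sub_cancel]
    ring
  exact ⟨hdvd, (Nat.dvd_add_right hdvd).mp (hsum ▸ dvd_mul_right α (n + 1))⟩
end

section
/- There is no finite projective plane of order n admitting a partition of its points into nonempty sets A, B, C such that every line meets A in 0 or (n+1)/2 points, meets B in 0 or (n+1)/2 points, and meets C in 0 or (n+1)/2 points. (Equivalently: with α = (n+1)/2, one has |A| = (n²+1)/2, but counting lines through a point outside A forces (n+1)/2 to divide |A|, which is impossible.) -/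
/-!
Counting a set `S` along the pencil of lines through a point `q ∉ S` gives `|S| = ∑ |l ∩ S|`,
summed over the `n + 1` lines `l ∋ q`. If every line meets `A` in `0` or `α` points, a point
outside `A` thus shows `α ∣ |A|`, while the pencil through a point `a ∈ A`, applied to `A \ {a}`,
gives `|A| = (n + 1)(α - 1) + 1`. As `n + 1 = 2α`, this is `1` modulo `α`, forcing `α = 1`
and `n = 1`.
-/

namespace FinProjPlane

variable {n : ℕ} (Pl : FinProjPlane n)

theorem ncard_eq_finsum_ncard_inter {S : Set Pl.P} {q : Pl.P} (hq : q ∉ S) :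
    S.ncard = ∑ᶠ l ∈ {l | Pl.I q l}, ({p | Pl.I p l} ∩ S).ncard := by
  have hcover : S = ⋃ l ∈ {l | Pl.I q l}, {p | Pl.I p l} ∩ S := by
    ext p
    simp only [Set.mem_iUnion, Set.mem_inter_iff, Set.mem_ofPred_eq, exists_prop]
    refine ⟨fun hp => ?_, fun ⟨_, _, _, hp⟩ => hp⟩
    obtain ⟨l, ⟨hpl, hql⟩, -⟩ := Pl.join p q (ne_of_mem_of_not_mem hp hq)
    exact ⟨l, hql, hpl, hp⟩
  have hdisj : Set.PairwiseDisjoint {l | Pl.I q l} (fun l => {p | Pl.I p l} ∩ S) := by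
    intro l hql m hqm hlm
    refine Set.disjoint_left.mpr fun p ⟨hpl, hp⟩ ⟨hpm, _⟩ => hq ?_
    obtain ⟨r, -, hr⟩ := Pl.meet l m hlm
    rwa [hr q ⟨hql, hqm⟩, ← hr p ⟨hpl, hpm⟩]
  conv_lhs => rw [hcover]
  exact (Set.toFinite _).ncard_biUnion (fun _ _ => Set.toFinite _) hdisj

theorem dvd_ncard_of_dvd_ncard_inter {S : Set Pl.P} {q : Pl.P} (hq : q ∉ S) {d : ℕ}
    (hd : ∀ l, d ∣ ({p | Pl.I p l} ∩ S).ncard) : d ∣ S.ncard := by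
  rw [Pl.ncard_eq_finsum_ncard_inter hq]
  exact finsum_mem_induction (d ∣ ·) (dvd_zero d) (fun _ _ => dvd_add) fun l _ => hd l

theorem ncard_eq_of_ncard_inter_eq {S : Set Pl.P} {a : Pl.P} (ha : a ∈ S) {k : ℕ}
    (hk : ∀ l, Pl.I a l → ({p | Pl.I p l} ∩ S).ncard = k + 1) :
    S.ncard = (n + 1) * k + 1 := by
  have hterm : ∀ l ∈ {l | Pl.I a l}, ({p | Pl.I p l} ∩ (S \ {a})).ncard = k := fun l hal => by
    rw [← Set.inter_sdiff_assoc,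
      Set.ncard_sdiff_singleton_of_mem (s := {p | Pl.I p l} ∩ S) ⟨hal, ha⟩, hk l hal,
      Nat.add_sub_cancel]
  have hrest : (S \ {a}).ncard = (n + 1) * k := by
    rw [Pl.ncard_eq_finsum_ncard_inter (fun h => h.2 rfl), finsum_mem_congr rfl hterm,
      ← Pl.point_card a, ← finsum_one, finsum_mem_mul' _ _ (Set.toFinite _), one_mul]
  rw [← Set.ncard_sdiff_singleton_add_one ha, hrest]

end FinProjPlane

theorem stmt_4_general (n : ℕ) (hn : 2 ≤ n) (Pl : FinProjPlane n) (A B : Set Pl.P) (α : ℕ)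
    (hhalf : 2 * α = n + 1)
    (hA : A.Nonempty) (hB : B.Nonempty)
    (hdisjAB : Disjoint A B)
    (hαA : ∀ l : Pl.L, ({p | Pl.I p l} ∩ A).ncard = 0 ∨ ({p | Pl.I p l} ∩ A).ncard = α) :
    False := by
  obtain ⟨a, ha⟩ := hA
  obtain ⟨b, hb⟩ := hB
  obtain ⟨k, rfl⟩ : ∃ k, α = k + 1 := ⟨α - 1, by omega⟩
  have hcard : A.ncard = (n + 1) * k + 1 :=
    Pl.ncard_eq_of_ncard_inter_eq ha fun l hal =>
      (hαA l).resolve_left (Set.ncard_ne_zero_of_mem (Set.mem_inter hal ha))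
  have hdvd : k + 1 ∣ A.ncard := by
    refine Pl.dvd_ncard_of_dvd_ncard_inter (hdisjAB.notMem_of_mem_right hb) fun l => ?_
    rcases hαA l with h | h <;> simp [h]
  rw [hcard, ← hhalf, mul_comm 2, mul_assoc] at hdvd
  have : k + 1 = 1 := Nat.dvd_one.mp ((Nat.dvd_add_right (dvd_mul_right _ _)).mp hdvd)
  omega

/-- No finite projective plane of order n admits a partition of its points into three
nonempty sets each met by every line in 0 or (n+1)/2 points. -/
theorem stmt_4 (n : ℕ) (hn : 2 ≤ n) (Pl : FinProjPlane n) (A B C : Set Pl.P) (α : ℕ)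
    (hhalf : 2 * α = n + 1)
    (hA : A.Nonempty) (hB : B.Nonempty) (hC : C.Nonempty)
    (hdisjAB : Disjoint A B) (hdisjAC : Disjoint A C) (hdisjBC : Disjoint B C)
    (hcover : A ∪ B ∪ C = Set.univ)
    (hαA : ∀ l : Pl.L, ({p | Pl.I p l} ∩ A).ncard = 0 ∨ ({p | Pl.I p l} ∩ A).ncard = α)
    (hαB : ∀ l : Pl.L, ({p | Pl.I p l} ∩ B).ncard = 0 ∨ ({p | Pl.I p l} ∩ B).ncard = α)
    (hαC : ∀ l : Pl.L, ({p | Pl.I p l} ∩ C).ncard = 0 ∨ ({p | Pl.I p l} ∩ C).ncard = α) :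
    False :=
  stmt_4_general n hn Pl A B α hhalf hA hB hdisjAB hαA
end

section
/- Every thick locally finitely chained generalized n-gon is locally finitely generated. -/
namespace IncGeom

/-- The restriction of a geometry to subsets of points and lines. -/
def restrict (G : IncGeom) (Ps : Set G.P) (Ls : Set G.L) : IncGeom where
  P := Ps
  L := Ls
  I := fun p l => G.I p.1 l.1

/-- `(Ps, Ls)` carries a sub-n-gon of `G` (possibly thin). -/
def IsSubPolygon (G : IncGeom) (n : ℕ) (Ps : Set G.P) (Ls : Set G.L) : Prop :=
  (G.restrict Ps Ls).IsWeakGenPolygon n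

/-- Points of the subgeometry generated by a point set S: the intersection of all
sub-n-gons containing S. -/
def genP (G : IncGeom) (n : ℕ) (S : Set G.P) : Set G.P :=
  {p | ∀ Ps Ls, G.IsSubPolygon n Ps Ls → S ⊆ Ps → p ∈ Ps}

/-- Lines of the subgeometry generated by a point set S. -/
def genL (G : IncGeom) (n : ℕ) (S : Set G.P) : Set G.L :=
  {l | ∀ Ps Ls, G.IsSubPolygon n Ps Ls → S ⊆ Ps → l ∈ Ls}

/-- Locally finitely generated: every finite point set generating a sub-n-gon
generates a finite one. -/
def LocFinGenerated (G : IncGeom) (n : ℕ) : Prop :=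
  ∀ S : Set G.P, S.Finite → G.IsSubPolygon n (G.genP n S) (G.genL n S) →
    (G.genP n S).Finite ∧ (G.genL n S).Finite

/-- Locally finitely chained: an increasing chain of finite point sets, each
generating a finite sub-n-gon, whose generated sub-n-gons exhaust G. -/
def LocFinChained (G : IncGeom) (n : ℕ) : Prop :=
  ∃ S : ℕ → Set G.P, Monotone S ∧ (∀ i, (S i).Finite) ∧
    (∀ i, G.IsSubPolygon n (G.genP n (S i)) (G.genL n (S i)) ∧
      (G.genP n (S i)).Finite ∧ (G.genL n (S i)).Finite) ∧
    (⋃ i, G.genP n (S i)) = Set.univ ∧ (⋃ i, G.genL n (S i)) = Set.univ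

end IncGeom

/-! The generated subgeometry is a closure operator, and a finite point set covered by the
increasing union of the finite sub-n-gons `⟨Sᵢ⟩` already lies in one of them. That `⟨Sᵢ⟩` is a
sub-n-gon containing `S`, so `⟨S⟩ ⊆ ⟨Sᵢ⟩` is finite. -/

namespace IncGeom

variable {G : IncGeom} {n : ℕ}

theorem genP_mono {S T : Set G.P} (h : S ⊆ T) : G.genP n S ⊆ G.genP n T :=
  fun _ hp Ps Ls hPoly hT => hp Ps Ls hPoly (h.trans hT)

theorem genP_subset_of_isSubPolygon {S : Set G.P} {Ps : Set G.P} {Ls : Set G.L}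
    (hPoly : G.IsSubPolygon n Ps Ls) (hS : S ⊆ Ps) : G.genP n S ⊆ Ps :=
  fun _ hp => hp Ps Ls hPoly hS

theorem genL_subset_of_isSubPolygon {S : Set G.P} {Ps : Set G.P} {Ls : Set G.L}
    (hPoly : G.IsSubPolygon n Ps Ls) (hS : S ⊆ Ps) : G.genL n S ⊆ Ls :=
  fun _ hl => hl Ps Ls hPoly hS

theorem exists_subset_genP_of_finite {T : ℕ → Set G.P} (hT : Monotone T)
    (hcover : ⋃ i, G.genP n (T i) = Set.univ) {S : Set G.P} (hS : S.Finite) :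
    ∃ i, S ⊆ G.genP n (T i) := by
  have hmono : Monotone fun i => G.genP n (T i) := fun _ _ hij => genP_mono (hT hij)
  have hdir : Directed (· ⊆ ·) fun i => G.genP n (T i) := hmono.directed_le
  simpa using hdir.exists_mem_subset_of_finset_subset_biUnion (s := hS.toFinset) (by simp [hcover])

end IncGeom

theorem stmt_11_general (n : ℕ) (G : IncGeom)
    (hchain : G.LocFinChained n) : G.LocFinGenerated n := by
  obtain ⟨T, hT, -, hfin, hcover, -⟩ := hchain
  intro S hS _
  obtain ⟨i, hi⟩ := IncGeom.exists_subset_genP_of_finite hT hcover hS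
  obtain ⟨hPoly, hPfin, hLfin⟩ := hfin i
  exact ⟨hPfin.subset (IncGeom.genP_subset_of_isSubPolygon hPoly hi),
    hLfin.subset (IncGeom.genL_subset_of_isSubPolygon hPoly hi)⟩

/-- Every thick locally finitely chained generalized n-gon is locally finitely
generated. -/
theorem stmt_11 (n : ℕ) (G : IncGeom) (hG : G.IsGenPolygon n)
    (hchain : G.LocFinChained n) : G.LocFinGenerated n :=
  stmt_11_general n G hchain
end

section
/- Let i and h be positive integers with gcd(i,h) = 1, and let q = 2^h. Then the set O(i,h) = {(1 : t : t^{2^i}) | t ∈ F_q} ∪ {(0 : 0 : 1)} of points of PG(2,q) is an oval (a set of q+1 points no three of which are collinear), and all tangent lines of O(i,h) pass through the nucleus (0 : 1 : 0). -/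
noncomputable section

open Projectivization
open scoped LinearAlgebra.Projectivization

variable (i h : ℕ)

/-- The Galois field with 2^h elements. -/
abbrev F (h : ℕ) := GaloisField 2 h

lemma vec1_ne_zero (t : F h) : ![(1 : F h), t, t ^ 2 ^ i] ≠ 0 := by
  intro hv
  have := congrFun hv 0
  simp at this

lemma vec001_ne_zero : ![(0 : F h), 0, 1] ≠ 0 := by
  intro hv
  have := congrFun hv 2
  simp at this

lemma vec010_ne_zero : ![(0 : F h), 1, 0] ≠ 0 := by
  intro hv
  have := congrFun hv 1
  simp at this

/-- The Segre point set O(i,h) in PG(2, 2^h). -/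
def segreOval : Set (ℙ (F h) (Fin 3 → F h)) :=
  {x | ∃ t : F h, x = Projectivization.mk (F h) ![1, t, t ^ 2 ^ i] (vec1_ne_zero i h t)} ∪
    {Projectivization.mk (F h) ![0, 0, 1] (vec001_ne_zero h)}

/-- The nucleus (0 : 1 : 0). -/
def nucleus : ℙ (F h) (Fin 3 → F h) :=
  Projectivization.mk (F h) ![0, 1, 0] (vec010_ne_zero h)

/-- The projective line defined by a nonzero linear functional. -/
def projLine (φ : (Fin 3 → F h) →ₗ[F h] F h) : Set (ℙ (F h) (Fin 3 → F h)) :=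
  {x | φ x.rep = 0}

/-! Since gcd(2^i - 1, 2^h - 1) = 2^gcd(i,h) - 1 = 1, the map x ↦ x^(2^i - 1) permutes the
nonzero elements of F_q. In characteristic 2 the map t ↦ t^(2^i) is additive, so the affine points
with parameters s, t, u are collinear iff a b^(2^i) = b a^(2^i) for a = t - s, b = u - s, and
this forces a = b. A line α x₀ + β x₁ + γ x₂ = 0 with β ≠ 0 never meets the oval exactly once:
the point at infinity (on the line iff γ = 0) is paired with the affine point t = α/β, and an
affine point t on the line is paired with the point at infinity if γ = 0 and with t + s if
γ ≠ 0, where s ≠ 0 solves β s = γ s^(2^i). -/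

section PowerMaps

variable {G₀ : Type*} [GroupWithZero G₀] {n : ℕ}

lemma eq_of_pow_eq_pow_of_coprime (hn : (Nat.card G₀ˣ).Coprime n) {a b : G₀}
    (ha : a ≠ 0) (hb : b ≠ 0) (hab : a ^ n = b ^ n) : a = b := by
  have := hn.pow_left_bijective.injective (a₁ := Units.mk0 a ha) (a₂ := Units.mk0 b hb)
    (Units.ext (by simpa using hab))
  simpa using congrArg Units.val this

lemma exists_pow_eq_of_coprime (hn : (Nat.card G₀ˣ).Coprime n) {c : G₀} (hc : c ≠ 0) :
    ∃ s ≠ (0 : G₀), s ^ n = c := by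
  obtain ⟨w, hw⟩ := hn.pow_left_bijective.surjective (Units.mk0 c hc)
  exact ⟨w, w.ne_zero, by simpa using congrArg Units.val hw⟩

end PowerMaps

section TwoPowerMaps

variable {K : Type*} [Field K] {i : ℕ}

lemma pow_two_pow_eq_pow_sub_one_mul (x : K) : x ^ 2 ^ i = x ^ (2 ^ i - 1) * x := by
  rw [← pow_succ, Nat.sub_add_cancel Nat.one_le_two_pow]

lemma eq_of_mul_pow_two_pow_eq (hn : (Nat.card Kˣ).Coprime (2 ^ i - 1)) {a b : K}
    (ha : a ≠ 0) (hb : b ≠ 0) (hab : a * b ^ 2 ^ i = b * a ^ 2 ^ i) : a = b := by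
  refine (eq_of_pow_eq_pow_of_coprime hn hb ha ?_).symm
  rw [pow_two_pow_eq_pow_sub_one_mul b, pow_two_pow_eq_pow_sub_one_mul a] at hab
  exact mul_left_cancel₀ (mul_ne_zero ha hb) (by linear_combination hab)

lemma exists_ne_zero_mul_add_mul_pow_two_pow_eq_zero [CharP K 2]
    (hn : (Nat.card Kˣ).Coprime (2 ^ i - 1)) {β γ : K} (hβ : β ≠ 0) (hγ : γ ≠ 0) :
    ∃ s ≠ 0, β * s + γ * s ^ 2 ^ i = 0 := by
  obtain ⟨s, hs, hpow⟩ := exists_pow_eq_of_coprime hn (div_ne_zero hβ hγ)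
  refine ⟨s, hs, ?_⟩
  rw [pow_two_pow_eq_pow_sub_one_mul, hpow, div_mul_eq_mul_div, mul_div_cancel₀ _ hγ]
  exact CharTwo.add_self_eq_zero _

end TwoPowerMaps

lemma Projectivization.linearIndependent_rep_mk {K V ι : Type*} [Field K] [AddCommGroup V]
    [Module K V] {v : ι → V} (hv : ∀ j, v j ≠ 0) (hli : LinearIndependent K v) :
    LinearIndependent K (fun j => (mk K (v j) (hv j)).rep) :=
  independent_iff.mp (Independent.mk v hv hli)

def segreVec : Option (F h) → Fin 3 → F h
  | none => ![0, 0, 1]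
  | some t => ![1, t, t ^ 2 ^ i]

lemma segreVec_ne_zero : ∀ p, segreVec i h p ≠ 0
  | none => vec001_ne_zero h
  | some t => vec1_ne_zero i h t

def segrePoint (p : Option (F h)) : ℙ (F h) (Fin 3 → F h) :=
  mk (F h) (segreVec i h p) (segreVec_ne_zero i h p)

section SegreOval

variable {i h}

lemma coprime_card_units_two_pow_sub_one (hh : h ≠ 0) (hgcd : i.gcd h = 1) :
    (Nat.card (F h)ˣ).Coprime (2 ^ i - 1) := by
  rw [Nat.card_units, GaloisField.card 2 h hh, Nat.Coprime, Nat.pow_sub_one_gcd_pow_sub_one,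
    Nat.gcd_comm, hgcd, pow_one]

lemma segreOval_eq_range : segreOval i h = Set.range (segrePoint i h) := by
  ext x
  simp only [segreOval, Set.mem_union, Set.mem_ofPred_eq, Set.mem_singleton_iff, Set.mem_range,
    Option.exists, segrePoint, segreVec]
  tauto

lemma segrePoint_injective : Function.Injective (segrePoint i h) := by
  intro p q hpq
  obtain ⟨a, ha⟩ := (mk_eq_mk_iff _ _ _ _ _).mp hpq
  have h0 := congrFun ha 0
  have h1 := congrFun ha 1
  cases p <;> cases q <;> simp_all [segreVec, Units.smul_def]

lemma ncard_segreOval (hh : h ≠ 0) : (segreOval i h).ncard = 2 ^ h + 1 := by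
  rw [segreOval_eq_range, Set.ncard_range_of_injective segrePoint_injective,
    Finite.card_option, GaloisField.card 2 h hh]

lemma det_segreVec_some (s t u : F h) :
    (Matrix.of ![segreVec i h (some s), segreVec i h (some t), segreVec i h (some u)]).det =
      (t - s) * (u - s) ^ 2 ^ i - (u - s) * (t - s) ^ 2 ^ i := by
  simp only [segreVec, Matrix.det_fin_three, Matrix.of_apply, Matrix.cons_val',
    Matrix.cons_val_zero, Matrix.cons_val_one, Matrix.cons_val, Matrix.cons_val_fin_one,
    sub_pow_char_pow]
  ring

lemma det_segreVec_ne_zero (hn : (Nat.card (F h)ˣ).Coprime (2 ^ i - 1)) {p q r : Option (F h)}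
    (hpq : p ≠ q) (hpr : p ≠ r) (hqr : q ≠ r) :
    (Matrix.of ![segreVec i h p, segreVec i h q, segreVec i h r]).det ≠ 0 := by
  rcases p with _ | s <;> rcases q with _ | t <;> rcases r with _ | u
  case some.some.some =>
    rw [Ne, Option.some_inj] at hpq hpr hqr
    rw [det_segreVec_some, sub_ne_zero]
    intro hd
    exact hqr (sub_left_inj.1 <| eq_of_mul_pow_two_pow_eq hn
      (sub_ne_zero.2 (Ne.symm hpq)) (sub_ne_zero.2 (Ne.symm hpr)) hd)
  all_goals simp_all [segreVec, Matrix.det_fin_three, sub_eq_zero, neg_add_eq_zero, eq_comm]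

lemma linearIndependent_rep_segrePoint (hn : (Nat.card (F h)ˣ).Coprime (2 ^ i - 1))
    {p q r : Option (F h)} (hpq : p ≠ q) (hpr : p ≠ r) (hqr : q ≠ r) :
    LinearIndependent (F h)
      ![(segrePoint i h p).rep, (segrePoint i h q).rep, (segrePoint i h r).rep] := by
  have := linearIndependent_rep_mk (v := ![segreVec i h p, segreVec i h q, segreVec i h r])
    (by simp [Fin.forall_fin_succ, segreVec_ne_zero])
    (Matrix.linearIndependent_rows_of_det_ne_zero (det_segreVec_ne_zero hn hpq hpr hqr))
  convert this using 1
  · funext j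
    fin_cases j <;> rfl
  · rfl

lemma mem_projLine_mk_iff (φ : (Fin 3 → F h) →ₗ[F h] F h) {v : Fin 3 → F h} (hv : v ≠ 0) :
    mk (F h) v hv ∈ projLine h φ ↔ φ v = 0 := by
  obtain ⟨a, ha⟩ := exists_smul_eq_mk_rep (F h) v hv
  rw [projLine, Set.mem_ofPred_eq, ← ha, Units.smul_def, map_smul, smul_eq_zero,
    or_iff_right a.ne_zero]

lemma map_segreVec_some (φ : (Fin 3 → F h) →ₗ[F h] F h) (t : F h) :
    φ (segreVec i h (some t)) = φ ![1, 0, 0] + φ ![0, 1, 0] * t + φ ![0, 0, 1] * t ^ 2 ^ i := by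
  have hv : segreVec i h (some t) = ![1, 0, 0] + t • ![0, 1, 0] + t ^ 2 ^ i • ![0, 0, 1] := by
    funext j
    fin_cases j <;> simp [segreVec]
  rw [hv, map_add, map_add, map_smul, map_smul, smul_eq_mul, smul_eq_mul, mul_comm t,
    mul_comm (t ^ 2 ^ i)]

lemma exists_ne_map_segreVec_eq_zero (hn : (Nat.card (F h)ˣ).Coprime (2 ^ i - 1))
    (φ : (Fin 3 → F h) →ₗ[F h] F h) (hβ : φ ![0, 1, 0] ≠ 0) {p : Option (F h)}
    (hp : φ (segreVec i h p) = 0) : ∃ q ≠ p, φ (segreVec i h q) = 0 := by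
  rcases p with _ | t
  · refine ⟨some (φ ![1, 0, 0] / φ ![0, 1, 0]), Option.some_ne_none _, ?_⟩
    rw [map_segreVec_some, show φ ![0, 0, 1] = 0 from hp, zero_mul, add_zero,
      mul_div_cancel₀ _ hβ, CharTwo.add_self_eq_zero]
  by_cases hγ : φ ![0, 0, 1] = 0
  · exact ⟨none, nofun, hγ⟩
  obtain ⟨s, hs, hker⟩ := exists_ne_zero_mul_add_mul_pow_two_pow_eq_zero hn hβ hγ
  refine ⟨some (t + s), by simpa using hs, ?_⟩
  rw [map_segreVec_some] at hp ⊢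
  rw [add_pow_char_pow]
  linear_combination hp + hker

lemma nucleus_mem_projLine_of_ncard_inter_eq_one (hn : (Nat.card (F h)ˣ).Coprime (2 ^ i - 1))
    (φ : (Fin 3 → F h) →ₗ[F h] F h) (h1 : (projLine h φ ∩ segreOval i h).ncard = 1) :
    nucleus h ∈ projLine h φ := by
  rw [nucleus, mem_projLine_mk_iff]
  by_contra hβ
  obtain ⟨x, hx⟩ := Set.ncard_eq_one.mp h1
  obtain ⟨hxφ, p, rfl⟩ : x ∈ projLine h φ ∩ Set.range (segrePoint i h) := by
    rw [← segreOval_eq_range, hx]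
    rfl
  obtain ⟨q, hqp, hq⟩ :=
    exists_ne_map_segreVec_eq_zero hn φ hβ ((mem_projLine_mk_iff φ _).1 hxφ)
  have hmem : segrePoint i h q ∈ projLine h φ ∩ segreOval i h :=
    ⟨(mem_projLine_mk_iff φ _).2 hq, segreOval_eq_range ▸ ⟨q, rfl⟩⟩
  rw [hx] at hmem
  exact hqp (segrePoint_injective hmem)

end SegreOval

theorem stmt_14 (hh : 0 < h) (hgcd : Nat.gcd i h = 1) :
    (segreOval i h).ncard = 2 ^ h + 1 ∧
    (∀ x y z : ℙ (F h) (Fin 3 → F h), x ∈ segreOval i h → y ∈ segreOval i h →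
      z ∈ segreOval i h → x ≠ y → x ≠ z → y ≠ z →
      LinearIndependent (F h) ![x.rep, y.rep, z.rep]) ∧
    (∀ φ : (Fin 3 → F h) →ₗ[F h] F h, φ ≠ 0 →
      (projLine h φ ∩ segreOval i h).ncard = 1 → nucleus h ∈ projLine h φ) := by
  have hn := coprime_card_units_two_pow_sub_one hh.ne' hgcd
  refine ⟨ncard_segreOval hh.ne', ?_, fun φ _ => nucleus_mem_projLine_of_ncard_inter_eq_one hn φ⟩
  rw [segreOval_eq_range]
  rintro _ _ _ ⟨p, rfl⟩ ⟨q, rfl⟩ ⟨r, rfl⟩ hpq hpr hqr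
  exact linearIndependent_rep_segrePoint hn (ne_of_apply_ne _ hpq) (ne_of_apply_ne _ hpr)
    (ne_of_apply_ne _ hqr)

end
end

section
/- Let Γ and Γ' be generalized n-gons of order (s,s) and (s',s') respectively, and let γ: Γ^Δ → Γ'^Δ be an epimorphism between their doubles. If γ maps some point of Γ (viewed as a line of Γ^Δ, or point, depending on the convention) to a point of Γ', then γ maps all points of Γ to points of Γ' and all lines of Γ to lines of Γ', thereby inducing an epimorphism γ̲ : Γ → Γ'. If instead γ maps some point of Γ to a line of Γ', then γ induces an epimorphism Γ → (Γ')^D onto the point-line dual. -/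
/-- The double of a geometry: points are the points and lines, lines are the flags. -/
def IncGeom.double (G : IncGeom) : IncGeom where
  P := G.P ⊕ G.L
  L := {f : G.P × G.L // G.I f.1 f.2}
  I := fun x f => x = Sum.inl f.1.1 ∨ x = Sum.inr f.1.2

/-- The point-line dual of a geometry. -/
def IncGeom.dual (G : IncGeom) : IncGeom where
  P := G.L
  L := G.P
  I := fun l p => G.I p l

/-!
Flags of `Γ` are the edges of its incidence graph, so `γ` sends adjacent vertices of the
incidence graph of `Γ` to equal or adjacent vertices of that of `Γ'`. It never collapses an edge
`{x, y}`: since `Γ'` has girth `2n` and no vertex of degree `1`, some `u` is at distance `n` from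
the common image, while a preimage of `u` is at distance `< n` from `x` or from `y` (the diameter
of `Γ` is `n` and the incidence graph is bipartite), and `γ` does not increase distances. So `γ`
is a homomorphism of incidence graphs; on the connected incidence graph of `Γ` it then either
preserves or swaps the two colour classes, and one vertex decides which.
-/
namespace SimpleGraph

variable {V W : Type*} {G : SimpleGraph V} {H : SimpleGraph W} {u v w x y z : V}

namespace Walk

theorem IsPath.egirth_le_length_add_length {p q : G.Walk u v} (hp : p.IsPath) (hq : q.IsPath)
    (hpq : p ≠ q) : G.egirth ≤ p.length + q.length := by
  obtain ⟨_, _, p', q', hp', hq', hcyc⟩ := hp.exists_isCycle_of_ne hq hpq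
  calc G.egirth ≤ (p'.append q'.reverse).length := egirth_le_length hcyc
    _ = p'.length + q'.length := by simp
    _ ≤ p.length + q.length := by
      gcongr <;> exact_mod_cast length_le_of_isSubwalk ‹_›

theorem IsPath.edist_eq_length {p : G.Walk u v} (hp : p.IsPath)
    (hgirth : 2 * p.length ≤ G.egirth) : G.edist u v = p.length := by
  classical
  refine le_antisymm (edist_le p) ?_
  obtain ⟨q, hq⟩ := p.reachable.exists_walk_length_eq_edist
  rw [← hq, Nat.cast_le]
  by_contra! hlt
  have hbypass : q.bypass.length < p.length := (length_bypass_le_length q).trans_lt hlt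
  have hcycle := hp.egirth_le_length_add_length q.bypass_isPath
    (fun h => by rw [← h] at hbypass; omega)
  have hshort : (p.length + q.bypass.length : ℕ∞) < 2 * p.length := by norm_cast; omega
  exact (hgirth.trans hcycle).not_gt hshort

theorem IsPath.eq_snd_of_adj_start_of_length_lt_egirth {p : G.Walk u v} (hp : p.IsPath)
    (hlen : p.length + 1 < G.egirth) (hadj : G.Adj u w) (hw : w ∈ p.support) : w = p.snd := by
  classical
  have hshort : (p.takeUntil w hw).length + 1 < G.egirth :=
    lt_of_le_of_lt (by gcongr; exact length_takeUntil_le_length p hw) hlen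
  have htake : p.takeUntil w hw = cons hadj Walk.nil := by
    by_contra hne
    have := (hp.takeUntil hw).egirth_le_length_add_length (Path.singleton hadj).isPath hne
    simp only [Path.singleton_coe, length_cons, length_nil, zero_add, Nat.cast_one] at this
    exact (this.trans_lt hshort).false
  have := p.getVert_length_takeUntil hw
  rw [htake] at this
  simpa [snd] using this.symm

end Walk

theorem exists_isPath_length_eq (hdeg : ∀ v, (G.neighborSet v).Nontrivial) (v : V) :
    ∀ k : ℕ, k + 1 < G.egirth → ∃ (u : V) (p : G.Walk u v), p.IsPath ∧ p.length = k
  | 0, _ => ⟨v, .nil, .nil, rfl⟩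
  | k + 1, hk => by
    have hlen : k + 1 < G.egirth := lt_of_le_of_lt (by norm_cast; omega) hk
    obtain ⟨u, p, hp, rfl⟩ := exists_isPath_length_eq hdeg v k hlen
    obtain ⟨z₁, hz₁, z₂, hz₂, hne⟩ := hdeg u
    have hfree : ∃ z, G.Adj u z ∧ z ∉ p.support := by
      by_contra! hall
      exact hne ((hp.eq_snd_of_adj_start_of_length_lt_egirth hlen hz₁ (hall z₁ hz₁)).trans
        (hp.eq_snd_of_adj_start_of_length_lt_egirth hlen hz₂ (hall z₂ hz₂)).symm)
    obtain ⟨z, hz, hzp⟩ := hfree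
    exact ⟨z, .cons hz.symm p, hp.cons hzp, rfl⟩

theorem neighborSet_nontrivial_of_ncard_eq {d : ℕ} (hd : ∀ v, (G.neighborSet v).ncard = d + 1)
    (hG : ¬ G.IsAcyclic) (v : V) : (G.neighborSet v).Nontrivial := by
  obtain ⟨a, c, hc⟩ : ∃ (a : V) (c : G.Walk a a), c.IsCycle := by
    simpa [IsAcyclic] using hG
  have ha : 1 < (G.neighborSet a).ncard := by
    rw [Set.one_lt_ncard (Set.finite_of_ncard_ne_zero (by rw [hd]; omega))]
    exact ⟨_, c.adj_snd hc.not_nil, _, (c.adj_penultimate hc.not_nil).symm, hc.snd_ne_penultimate⟩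
  rw [hd a] at ha
  exact (Set.one_lt_ncard_iff_nontrivial_and_finite.mp (by rw [hd v]; omega)).1

theorem edist_le_edist_of_forall_adj {f : V → W}
    (hf : ∀ ⦃x y⦄, G.Adj x y → H.edist (f x) (f y) ≤ 1) (x y : V) :
    H.edist (f x) (f y) ≤ G.edist x y := by
  have hwalk : ∀ {x y : V} (p : G.Walk x y), H.edist (f x) (f y) ≤ p.length := by
    intro x y p
    induction p with
    | nil => simp
    | cons h p ih =>
      calc _ ≤ H.edist _ _ + H.edist _ _ := H.edist_triangle
        _ ≤ 1 + p.length := add_le_add (hf h) ih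
        _ = _ := by simp [add_comm]
  by_cases hxy : G.Reachable x y
  · obtain ⟨p, hp⟩ := hxy.exists_walk_length_eq_edist
    exact hp ▸ hwalk p
  · simp [edist_eq_top_of_not_reachable hxy]

theorem Coloring.eq_iff_eq_of_reachable (c c' : G.Coloring Bool) (h : G.Reachable x y) :
    c x = c' x ↔ c y = c' y := by
  obtain ⟨p⟩ := h
  have := (c.even_length_iff_congr p).symm.trans (c'.even_length_iff_congr p)
  generalize c x = a, c y = b, c' x = a', c' y = b' at this ⊢
  revert a b a' b'
  decide

theorem Coloring.edist_ne_edist_of_adj (c : G.Coloring Bool) (hz : G.Reachable z x)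
    (hxy : G.Adj x y) : G.edist z x ≠ G.edist z y := by
  obtain ⟨p, hp⟩ := hz.exists_walk_length_eq_edist
  obtain ⟨q, hq⟩ := (hz.trans hxy.reachable).exists_walk_length_eq_edist
  rw [← hp, ← hq, Ne, Nat.cast_inj]
  intro hpq
  have hcxy := c.valid hxy
  have := (c.even_length_iff_congr p).symm.trans (hpq ▸ c.even_length_iff_congr q)
  generalize c x = a, c y = b, c z = e at this hcxy
  revert a b e
  decide

theorem adj_apply_of_surjective {f : V → W} (hf : ∀ ⦃x y⦄, G.Adj x y → H.edist (f x) (f y) ≤ 1)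
    (hsurj : Function.Surjective f) (c : G.Coloring Bool) {n : ℕ} (hn : 2 ≤ n)
    (hdiam : G.ediam ≤ n) (hdeg : ∀ w, (H.neighborSet w).Nontrivial) (hgirth : 2 * n ≤ H.egirth)
    (hxy : G.Adj x y) : H.Adj (f x) (f y) := by
  refine (edist_le_one_iff_adj_or_eq.mp (hf hxy)).resolve_right fun hcollapse => ?_
  obtain ⟨u, p, hp, hlen⟩ := exists_isPath_length_eq hdeg (f y) n
    (lt_of_lt_of_le (by norm_cast; omega) hgirth)
  have hfar : H.edist u (f y) = n := hlen ▸ hp.edist_eq_length (hlen ▸ hgirth)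
  obtain ⟨z, rfl⟩ := hsurj u
  have hconn := preconnected_of_ediam_ne_top (ne_top_of_le_ne_top (ENat.natCast_ne_top n) hdiam)
  have hnear : G.edist z x < n ∨ G.edist z y < n := by
    by_contra! h
    exact c.edist_ne_edist_of_adj (hconn z x) hxy
      ((le_antisymm (edist_le_ediam.trans hdiam) h.1).trans
        (le_antisymm (edist_le_ediam.trans hdiam) h.2).symm)
  rcases hnear with hnear | hnear
  · have := (edist_le_edist_of_forall_adj hf z x).trans_lt hnear
    rw [hcollapse, hfar] at this
    exact this.false
  · have := (edist_le_edist_of_forall_adj hf z y).trans_lt hnear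
    rw [hfar] at this
    exact this.false

end SimpleGraph

open SimpleGraph

namespace IncGeom

variable {G G' : IncGeom}

def coloring (G : IncGeom) : G.incGraph.Coloring Bool :=
  Coloring.mk Sum.isLeft <| by rintro _ _ (⟨p, l, rfl, rfl, -⟩ | ⟨p, l, rfl, rfl, -⟩) <;> simp

@[simp]
theorem coloring_apply (G : IncGeom) (x : G.P ⊕ G.L) : G.coloring x = x.isLeft := rfl

theorem HasOrder.ncard_neighborSet {s : ℕ} (h : G.HasOrder s s) (x : G.P ⊕ G.L) :
    (G.incGraph.neighborSet x).ncard = s + 1 := by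
  rcases x with p | l
  · have : G.incGraph.neighborSet (.inl p) = Sum.inr '' {l | G.I p l} := by
      ext (_ | _) <;> simp [incGraph]
    rw [this, Set.ncard_image_of_injective _ Sum.inr_injective, h.2]
  · have : G.incGraph.neighborSet (.inr l) = Sum.inl '' {p | G.I p l} := by
      ext (_ | _) <;> simp [incGraph]
    rw [this, Set.ncard_image_of_injective _ Sum.inl_injective, h.1]

theorem exists_double_I_of_adj {x y : G.P ⊕ G.L} (h : G.incGraph.Adj x y) :
    ∃ F : G.double.L, G.double.I x F ∧ G.double.I y F := by
  rcases h with ⟨p, l, rfl, rfl, hI⟩ | ⟨p, l, rfl, rfl, hI⟩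
  · exact ⟨⟨(p, l), hI⟩, .inl rfl, .inr rfl⟩
  · exact ⟨⟨(p, l), hI⟩, .inr rfl, .inl rfl⟩

theorem edist_le_one_of_double_I {x y : G.P ⊕ G.L} {F : G.double.L} (hx : G.double.I x F)
    (hy : G.double.I y F) : G.incGraph.edist x y ≤ 1 := by
  obtain ⟨⟨p, l⟩, hI⟩ := F
  rw [edist_le_one_iff_adj_or_eq]
  rcases hx with rfl | rfl <;> rcases hy with rfl | rfl <;> simp_all [incGraph]

def dualIso (G : IncGeom) : G.incGraph ≃g G.dual.incGraph where
  toEquiv := Equiv.sumComm G.P G.L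
  map_rel_iff' {x y} := by
    change G.dual.incGraph.Adj x.swap y.swap ↔ _
    rcases x with _ | _ <;> rcases y with _ | _ <;> simp [incGraph, dual]

theorem isLeft_apply_eq (f : G.incGraph →g G'.incGraph) (hconn : G.incGraph.Preconnected)
    (h₀ : ∃ p p', f (.inl p) = .inl p') (x : G.P ⊕ G.L) : (f x).isLeft = x.isLeft := by
  obtain ⟨p, p', hp⟩ := h₀
  have := G.coloring.eq_iff_eq_of_reachable (G'.coloring.comp f) (hconn (.inl p) x)
  simpa [hp, eq_comm] using this

theorem exists_incMor_of_isLeft_eq (f : G.incGraph →g G'.incGraph)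
    (hf : Function.Surjective f) (hside : ∀ x, (f x).isLeft = x.isLeft) :
    ∃ δ : IncMor G G', δ.IsEpi ∧
      (∀ p, f (.inl p) = .inl (δ.fP p)) ∧ ∀ l, f (.inr l) = .inr (δ.fL l) := by
  have hP (p : G.P) : ∃ p', f (.inl p) = .inl p' := Sum.isLeft_iff.mp (hside _)
  have hL (l : G.L) : ∃ l', f (.inr l) = .inr l' :=
    Sum.isRight_iff.mp (by simpa using hside (.inr l))
  choose fP hfP using hP
  choose fL hfL using hL
  have inc (p : G.P) (l : G.L) (hI : G.I p l) : G'.I (fP p) (fL l) := by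
    have := f.map_adj (show G.incGraph.Adj (.inl p) (.inr l) from .inl ⟨p, l, rfl, rfl, hI⟩)
    rw [hfP, hfL] at this
    simpa [incGraph] using this
  refine ⟨⟨fP, fL, inc⟩, ⟨fun p' => ?_, fun l' => ?_⟩, hfP, hfL⟩
  · obtain ⟨p | l, hx⟩ := hf (.inl p')
    · exact ⟨p, Sum.inl_injective ((hfP p).symm.trans hx)⟩
    · simp [hfL] at hx
  · obtain ⟨p | l, hx⟩ := hf (.inr l')
    · simp [hfP] at hx
    · exact ⟨l, Sum.inr_injective ((hfL l).symm.trans hx)⟩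

end IncGeom

theorem IncMor.edist_le_one_of_adj {G G' : IncGeom} (γ : IncMor G.double G'.double)
    {x y : G.P ⊕ G.L} (h : G.incGraph.Adj x y) : G'.incGraph.edist (γ.fP x) (γ.fP y) ≤ 1 := by
  obtain ⟨F, hx, hy⟩ := IncGeom.exists_double_I_of_adj h
  exact IncGeom.edist_le_one_of_double_I (γ.inc _ _ hx) (γ.inc _ _ hy)

theorem stmt_15_general (n s' : ℕ) (hn : 2 ≤ n) (Γ Γ' : IncGeom)
    (hΓ : Γ.IsWeakGenPolygon n)
    (hΓ' : Γ'.IsWeakGenPolygon n) (hΓ'ord : Γ'.HasOrder s' s')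
    (γ : IncMor Γ.double Γ'.double) (hepi : γ.IsEpi) :
    ((∃ (p : Γ.P) (p' : Γ'.P), γ.fP (Sum.inl p) = Sum.inl p') →
      ∃ δ : IncMor Γ Γ', δ.IsEpi ∧
        (∀ p : Γ.P, γ.fP (Sum.inl p) = Sum.inl (δ.fP p)) ∧
        (∀ l : Γ.L, γ.fP (Sum.inr l) = Sum.inr (δ.fL l))) ∧
    ((∃ (p : Γ.P) (l' : Γ'.L), γ.fP (Sum.inl p) = Sum.inr l') →
      ∃ δ : IncMor Γ Γ'.dual, δ.IsEpi ∧
        (∀ p : Γ.P, γ.fP (Sum.inl p) = Sum.inr (δ.fP p)) ∧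
        (∀ l : Γ.L, γ.fP (Sum.inr l) = Sum.inl (δ.fL l))) := by
  have hgirth : 2 * n ≤ Γ'.incGraph.egirth := by rw [hΓ'.2]; push_cast; rfl
  have hconn : Γ.incGraph.Preconnected :=
    preconnected_of_ediam_ne_top (by rw [hΓ.1]; exact ENat.natCast_ne_top n)
  have hdeg : ∀ x, (Γ'.incGraph.neighborSet x).Nontrivial :=
    neighborSet_nontrivial_of_ncard_eq hΓ'ord.ncard_neighborSet
      (by rw [← egirth_eq_top, hΓ'.2]; exact ENat.natCast_ne_top _)
  let f : Γ.incGraph →g Γ'.incGraph :=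
    ⟨γ.fP, adj_apply_of_surjective (fun _ _ => γ.edist_le_one_of_adj) hepi.1 Γ.coloring hn
      hΓ.1.le hdeg hgirth⟩
  refine ⟨fun h₀ => IncGeom.exists_incMor_of_isLeft_eq f hepi.1
    (IncGeom.isLeft_apply_eq f hconn h₀), fun ⟨p, l', hp⟩ => ?_⟩
  let f' := Γ'.dualIso.toHom.comp f
  have hside := IncGeom.isLeft_apply_eq f' hconn ⟨p, l', congrArg Sum.swap hp⟩
  obtain ⟨δ, hδ, hP, hL⟩ :=
    IncGeom.exists_incMor_of_isLeft_eq f' (Γ'.dualIso.surjective.comp hepi.1) hside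
  exact ⟨δ, hδ, fun p => (Sum.swap_swap _).symm.trans (congrArg Sum.swap (hP p)),
    fun l => (Sum.swap_swap _).symm.trans (congrArg Sum.swap (hL l))⟩

/-- An epimorphism between the doubles of generalized n-gons of orders (s,s) and
(s'"'"',s'"'"') either sends all points of Γ to points of Γ'"'"' and all lines to lines, inducing
an epimorphism Γ → Γ'"'"', or sends all points of Γ to lines of Γ'"'"', inducing an
epimorphism Γ → (Γ'"'"')^D onto the dual. -/
theorem stmt_15 (n s s' : ℕ) (hn : 2 ≤ n) (Γ Γ' : IncGeom)
    (hΓ : Γ.IsWeakGenPolygon n) (hΓord : Γ.HasOrder s s)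
    (hΓ' : Γ'.IsWeakGenPolygon n) (hΓ'ord : Γ'.HasOrder s' s')
    (γ : IncMor Γ.double Γ'.double) (hepi : γ.IsEpi) :
    ((∃ (p : Γ.P) (p' : Γ'.P), γ.fP (Sum.inl p) = Sum.inl p') →
      ∃ δ : IncMor Γ Γ', δ.IsEpi ∧
        (∀ p : Γ.P, γ.fP (Sum.inl p) = Sum.inl (δ.fP p)) ∧
        (∀ l : Γ.L, γ.fP (Sum.inr l) = Sum.inr (δ.fL l))) ∧
    ((∃ (p : Γ.P) (l' : Γ'.L), γ.fP (Sum.inl p) = Sum.inr l') →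
      ∃ δ : IncMor Γ Γ'.dual, δ.IsEpi ∧
        (∀ p : Γ.P, γ.fP (Sum.inl p) = Sum.inr (δ.fP p)) ∧
        (∀ l : Γ.L, γ.fP (Sum.inr l) = Sum.inl (δ.fL l))) :=
  stmt_15_general n s' hn Γ Γ' hΓ hΓ' hΓ'ord γ hepi
end

section
/- Let S' be a geometrical hyperplane of a finite thick generalized quadrangle S of order (s,t). Then S' is one of exactly three types: (A) an ovoid of S (a set of points meeting every line in exactly one point, with no lines); (B) the perp x^⊥ of a point x (all points collinear with or equal to x, with the lines through x); or (C) a subquadrangle of S of order (s, t/s). -/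
namespace IncGeom

/-- H is a geometrical hyperplane: every line of G meets H in exactly one point or
lies entirely inside H, and H is a proper subset. -/
def IsGeomHyperplane (G : IncGeom) (H : Set G.P) : Prop :=
  H ≠ Set.univ ∧
    ∀ l : G.L, (∃! p : G.P, p ∈ H ∧ G.I p l) ∨ (∀ p : G.P, G.I p l → p ∈ H)

/-- The perp of a point: all points collinear with (or equal to) it. -/
def perp (G : IncGeom) (x : G.P) : Set G.P := {y | G.Collin x y}

end IncGeom

/-! A line meets `H` in one point or lies in `H`. If no line lies in `H`, then `H` is an ovoid.
If the lines inside `H` pairwise meet, they pass through a common point `x` (a generalized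
quadrangle has no triangles), and `H = x^⊥`. Otherwise two non-collinear points of `H` lie on
equally many lines of `H`, no point of `H` has all its lines inside `H`, and a point `z ∉ H` is
collinear with `t + 1` pairwise non-collinear points of `H`; together these force every point of
`H` onto the same number `t' + 1` of lines of `H`. Counting the points of `H` from a line inside
`H` and from a line through `z` gives `(s + 1)(1 + s t') = 1 + (t' + 1) s + s t`,
i.e. `t = s t'`. -/

open Set

theorem finsum_mem_const_eq_ncard_mul {ι : Type*} (t : Set ι) (k : ℕ) :
    ∑ᶠ _ ∈ t, k = t.ncard * k := by
  rw [← finsum_one, finsum_mem_mul]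
  simp only [one_mul]

namespace IncGeom

def pointsOn (G : IncGeom) (l : G.L) : Set G.P := {p | G.I p l}

def linesThrough (G : IncGeom) (p : G.P) : Set G.L := {l | G.I p l}

def fullLines (G : IncGeom) (H : Set G.P) : Set G.L := {l | ∀ p, G.I p l → p ∈ H}

def fullLinesThrough (G : IncGeom) (H : Set G.P) (p : G.P) : Set G.L :=
  G.fullLines H ∩ G.linesThrough p

variable {G : IncGeom}

theorem Collin.symm {p q : G.P} (h : G.Collin p q) : G.Collin q p :=
  let ⟨l, hp, hq⟩ := h
  ⟨l, hq, hp⟩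

theorem HasOrder.ncard_pointsOn {s t : ℕ} (hord : G.HasOrder s t) (l : G.L) :
    (G.pointsOn l).ncard = s + 1 :=
  hord.1 l

theorem HasOrder.ncard_linesThrough {s t : ℕ} (hord : G.HasOrder s t) (p : G.P) :
    (G.linesThrough p).ncard = t + 1 :=
  hord.2 p

theorem Thick.exists_incident_ne (hthick : G.Thick) (p : G.P) (l : G.L) :
    ∃ m, G.I p m ∧ m ≠ l := by
  obtain ⟨l₁, l₂, -, h₁₂, -, -, h₁, h₂, -⟩ := hthick.1 p
  by_cases hl : l₁ = l
  · exact ⟨l₂, h₂, fun h => h₁₂ (hl.trans h.symm)⟩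
  · exact ⟨l₁, h₁, hl⟩

theorem Thick.exists_incident_ne_ne (hthick : G.Thick) (l : G.L) (a b : G.P) :
    ∃ p, G.I p l ∧ p ≠ a ∧ p ≠ b := by
  obtain ⟨p₁, p₂, p₃, h₁₂, h₁₃, h₂₃, h₁, h₂, h₃⟩ := hthick.2 l
  by_contra! h
  rcases eq_or_ne p₁ a with rfl | h₁a
  · exact h₂₃ ((h p₂ h₂ h₁₂.symm).trans (h p₃ h₃ h₁₃.symm).symm)
  · rcases eq_or_ne p₂ a with rfl | h₂a
    · exact h₁₃ ((h p₁ h₁ h₁₂).trans (h p₃ h₃ h₂₃.symm).symm)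
    · exact h₁₂ ((h p₁ h₁ h₁a).trans (h p₂ h₂ h₂a).symm)

theorem IsGQ.line_eq (hG : G.IsGQ) {p q : G.P} {l m : G.L} (hpl : G.I p l) (hql : G.I q l)
    (hpm : G.I p m) (hqm : G.I q m) (hpq : p ≠ q) : l = m :=
  hG.1 p q hpq l m hpl hql hpm hqm

theorem IsGQ.exists_collin (hG : G.IsGQ) {p : G.P} {l : G.L} (hpl : ¬ G.I p l) :
    ∃ q, G.I q l ∧ G.Collin p q :=
  (hG.2 p l hpl).exists

theorem IsGQ.eq_of_collin (hG : G.IsGQ) {p a b : G.P} {l : G.L} (hpl : ¬ G.I p l)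
    (ha : G.I a l) (hpa : G.Collin p a) (hb : G.I b l) (hpb : G.Collin p b) : a = b :=
  (hG.2 p l hpl).unique ⟨ha, hpa⟩ ⟨hb, hpb⟩

theorem IsGQ.incident_of_meets (hG : G.IsGQ) {x a b : G.P} {l l₀ l₁ : G.L} (h₀₁ : l₀ ≠ l₁)
    (hx₀ : G.I x l₀) (hx₁ : G.I x l₁) (ha : G.I a l) (ha₀ : G.I a l₀) (hb : G.I b l)
    (hb₁ : G.I b l₁) : G.I x l := by
  by_contra hxl
  obtain rfl : a = b := hG.eq_of_collin hxl ha ⟨l₀, hx₀, ha₀⟩ hb ⟨l₁, hx₁, hb₁⟩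
  exact h₀₁ (hG.line_eq ha₀ hx₀ hb₁ hx₁ (by rintro rfl; exact hxl ha))

theorem IsGQ.sdiff_pointsOn_eq_biUnion (hG : G.IsGQ) (X : Set G.P) (l : G.L) :
    X \ G.pointsOn l = ⋃ q ∈ G.pointsOn l, (X ∩ G.perp q) \ G.pointsOn l := by
  ext p
  simp only [mem_iUnion, exists_prop]
  constructor
  · rintro ⟨hpX, hpl⟩
    obtain ⟨q, hql, hpq⟩ := hG.exists_collin hpl
    exact ⟨q, hql, ⟨hpX, hpq.symm⟩, hpl⟩
  · rintro ⟨q, -, ⟨hpX, -⟩, hpl⟩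
    exact ⟨hpX, hpl⟩

theorem IsGQ.pairwiseDisjoint_inter_perp_sdiff (hG : G.IsGQ) (X : Set G.P) (l : G.L) :
    (G.pointsOn l).PairwiseDisjoint fun q => (X ∩ G.perp q) \ G.pointsOn l := by
  intro q₁ hq₁ q₂ hq₂ hne
  refine disjoint_left.2 fun p hp₁ hp₂ => hne ?_
  exact hG.eq_of_collin hp₁.2 hq₁ hp₁.1.2.symm hq₂ hp₂.1.2.symm

theorem IsGQ.ncard_eq_add_finsum [Finite G.P] (hG : G.IsGQ) (X : Set G.P) (l : G.L) :
    X.ncard = (X ∩ G.pointsOn l).ncard +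
      ∑ᶠ q ∈ G.pointsOn l, ((X ∩ G.perp q) \ G.pointsOn l).ncard := by
  rw [← ncard_inter_add_ncard_sdiff_eq_ncard X (G.pointsOn l), hG.sdiff_pointsOn_eq_biUnion,
    (toFinite _).ncard_biUnion (fun _ _ => toFinite _) (hG.pairwiseDisjoint_inter_perp_sdiff X l)]

theorem IsGQ.ncard_biUnion_pointsOn_sdiff [Finite G.P] [Finite G.L] (hG : G.IsGQ) {s t : ℕ}
    (hord : G.HasOrder s t) {q : G.P} {M : Set G.L} (hM : ∀ m ∈ M, G.I q m) :
    (⋃ m ∈ M, G.pointsOn m \ {q}).ncard = M.ncard * s := by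
  have hcard : ∀ m ∈ M, (G.pointsOn m \ {q}).ncard = s := fun m hm => by
    have := ncard_sdiff_singleton_add_one (show q ∈ G.pointsOn m from hM m hm)
    rw [hord.ncard_pointsOn] at this
    omega
  rw [(toFinite M).ncard_biUnion (fun _ _ => toFinite _), finsum_mem_congr rfl hcard,
    finsum_mem_const_eq_ncard_mul]
  intro m₁ hm₁ m₂ hm₂ hne
  exact disjoint_left.2 fun p hp₁ hp₂ =>
    hne (hG.line_eq hp₁.1 (hM m₁ hm₁) hp₂.1 (hM m₂ hm₂) hp₁.2)

theorem HasOrder.restrict_fullLines {H : Set G.P} {s t c : ℕ} (hord : G.HasOrder s t)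
    (hc : ∀ p ∈ H, (G.fullLinesThrough H p).ncard = c + 1) :
    (G.restrict H (G.fullLines H)).HasOrder s c := by
  refine ⟨fun l => ?_, fun p => ?_⟩
  · exact (ncard_preimage_of_injective_subset_range Subtype.val_injective
      fun u hu => ⟨⟨u, l.2 u hu⟩, rfl⟩).trans (hord.ncard_pointsOn l.1)
  · rw [← hc p.1 p.2, ← ncard_preimage_of_injective_subset_range Subtype.val_injective
      (s := G.fullLinesThrough H p.1) fun m hm => ⟨⟨m, hm.1⟩, rfl⟩]
    congr 1
    ext m
    exact ⟨fun h => ⟨m.2, h⟩, fun h => h.2⟩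

namespace IsGeomHyperplane

variable {H : Set G.P}

theorem exists_notMem (hH : G.IsGeomHyperplane H) : ∃ z, z ∉ H :=
  ne_univ_iff_exists_notMem H |>.1 hH.1

theorem mem_fullLines (hH : G.IsGeomHyperplane H) {p q : G.P} {l : G.L} (hp : p ∈ H)
    (hq : q ∈ H) (hpq : p ≠ q) (hpl : G.I p l) (hql : G.I q l) : l ∈ G.fullLines H :=
  (hH.2 l).resolve_left fun h => hpq (h.unique ⟨hp, hpl⟩ ⟨hq, hql⟩)

theorem existsUnique_mem (hH : G.IsGeomHyperplane H) {z : G.P} {l : G.L} (hz : z ∉ H)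
    (hzl : G.I z l) : ∃! p, p ∈ H ∧ G.I p l :=
  (hH.2 l).resolve_right fun h => hz (h z hzl)

theorem fullLinesThrough_nonempty (hG : G.IsGQ) (hH : G.IsGeomHyperplane H) {l : G.L}
    (hl : l ∈ G.fullLines H) {p : G.P} (hp : p ∈ H) : (G.fullLinesThrough H p).Nonempty := by
  by_cases hpl : G.I p l
  · exact ⟨l, hl, hpl⟩
  obtain ⟨q, hql, m, hpm, hqm⟩ := hG.exists_collin hpl
  exact ⟨m, hH.mem_fullLines hp (hl q hql) (fun h => hpl (h ▸ hql)) hpm hqm, hpm⟩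

theorem isGQ_restrict (hG : G.IsGQ) (hH : G.IsGeomHyperplane H) :
    (G.restrict H (G.fullLines H)).IsGQ := by
  refine ⟨fun p q hpq l m hpl hql hpm hqm =>
    Subtype.ext (hG.line_eq hpl hql hpm hqm fun h => hpq (Subtype.ext h)), fun p l hpl => ?_⟩
  obtain ⟨q, hql, m, hpm, hqm⟩ := hG.exists_collin hpl
  have hq : q ∈ H := l.2 q hql
  have hm := hH.mem_fullLines p.2 hq (by rintro rfl; exact hpl hql) hpm hqm
  refine ⟨⟨q, hq⟩, ⟨hql, ⟨m, hm⟩, hpm, hqm⟩, ?_⟩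
  rintro ⟨r, hr⟩ ⟨hrl, n, hpn, hrn⟩
  exact Subtype.ext (hG.eq_of_collin hpl hrl ⟨n.1, hpn, hrn⟩ hql ⟨m, hpm, hqm⟩)

theorem ncard_inter_perp (hG : G.IsGQ) (hH : G.IsGeomHyperplane H) {s t : ℕ}
    (hord : G.HasOrder s t) {z : G.P} (hz : z ∉ H) : (H ∩ G.perp z).ncard = t + 1 := by
  rw [← hord.ncard_linesThrough z]
  refine ncard_congr (fun p hp => hp.2.choose) (fun p hp => hp.2.choose_spec.1)
    (fun p q hp hq hpq => ?_) (fun l hzl => ?_)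
  · obtain ⟨_, -, hu⟩ := hH.existsUnique_mem hz hp.2.choose_spec.1
    exact (hu p ⟨hp.1, hp.2.choose_spec.2⟩).trans (hu q ⟨hq.1, hpq ▸ hq.2.choose_spec.2⟩).symm
  · obtain ⟨p, ⟨hp, hpl⟩, -⟩ := hH.existsUnique_mem hz hzl
    have hzp : G.Collin z p := ⟨l, hzl, hpl⟩
    exact ⟨p, ⟨hp, hzp⟩, hG.line_eq hzp.choose_spec.1 hzp.choose_spec.2 hzl hpl
      (ne_of_mem_of_not_mem hp hz).symm⟩

theorem not_collin_of_mem_inter_perp (hG : G.IsGQ) (hH : G.IsGeomHyperplane H) {z a b : G.P}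
    (hz : z ∉ H) (ha : a ∈ H ∩ G.perp z) (hb : b ∈ H ∩ G.perp z) (hab : a ≠ b) :
    ¬ G.Collin a b := by
  rintro ⟨l, hal, hbl⟩
  have hl := hH.mem_fullLines ha.1 hb.1 hab hal hbl
  exact hab (hG.eq_of_collin (fun hzl => hz (hl z hzl)) hal ha.2 hbl hb.2)

theorem exists_mem_inter_perp_ne (hG : G.IsGQ) (hH : G.IsGeomHyperplane H) (hthick : G.Thick)
    {z : G.P} (hz : z ∉ H) : ∃ a ∈ H ∩ G.perp z, ∃ b ∈ H ∩ G.perp z, a ≠ b := by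
  obtain ⟨l₁, l₂, -, h₁₂, -, -, hz₁, hz₂, -⟩ := hthick.1 z
  obtain ⟨a, ⟨ha, hal⟩, -⟩ := hH.existsUnique_mem hz hz₁
  obtain ⟨b, ⟨hb, hbl⟩, -⟩ := hH.existsUnique_mem hz hz₂
  refine ⟨a, ⟨ha, l₁, hz₁, hal⟩, b, ⟨hb, l₂, hz₂, hbl⟩, ?_⟩
  rintro rfl
  exact h₁₂ (hG.line_eq hz₁ hal hz₂ hbl (ne_of_mem_of_not_mem ha hz).symm)

theorem exists_mem_fullLines_ne (hG : G.IsGQ) (hH : G.IsGeomHyperplane H) (hthick : G.Thick)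
    {l : G.L} (hl : l ∈ G.fullLines H) : ∃ m ∈ G.fullLines H, m ≠ l := by
  by_contra! hone
  obtain ⟨z, hz⟩ := hH.exists_notMem
  obtain ⟨a, ⟨ha, hza⟩, b, ⟨hb, hzb⟩, hab⟩ := hH.exists_mem_inter_perp_ne hG hthick hz
  have hon : ∀ p ∈ H, G.I p l := fun p hp => by
    obtain ⟨m, hm, hpm⟩ := hH.fullLinesThrough_nonempty hG hl hp
    exact hone m hm ▸ hpm
  exact hab (hG.eq_of_collin (fun hzl => hz (hl z hzl)) (hon a ha) hza (hon b hb) hzb)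

theorem perp_subset (hG : G.IsGQ) (hH : G.IsGeomHyperplane H) (hthick : G.Thick) {l : G.L}
    (hl : l ∈ G.fullLines H) {x : G.P} (hx : ∀ m ∈ G.fullLines H, G.I x m) : G.perp x ⊆ H := by
  rintro y ⟨m, hxm, hym⟩
  by_contra hy
  obtain ⟨a, ⟨ha, hya⟩, b, ⟨hb, hyb⟩, hab⟩ := hH.exists_mem_inter_perp_ne hG hthick hy
  have hx_only : ∀ c ∈ H, G.Collin y c → c = x := fun c hc hyc => by
    obtain ⟨n, hn, hcn⟩ := hH.fullLinesThrough_nonempty hG hl hc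
    exact hG.eq_of_collin (fun hyn => hy (hn y hyn)) hcn hyc (hx n hn) ⟨m, hym, hxm⟩
  exact hab ((hx_only a ha hya).trans (hx_only b hb hyb).symm)

theorem exists_eq_perp (hG : G.IsGQ) (hH : G.IsGeomHyperplane H) (hthick : G.Thick) {l : G.L}
    (hl : l ∈ G.fullLines H)
    (hmeet : ∀ l₁ ∈ G.fullLines H, ∀ l₂ ∈ G.fullLines H, ∃ p, G.I p l₁ ∧ G.I p l₂) :
    ∃ x, H = G.perp x := by
  obtain ⟨l', hl', hne⟩ := hH.exists_mem_fullLines_ne hG hthick hl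
  obtain ⟨x, hxl', hxl⟩ := hmeet l' hl' l hl
  have hx : ∀ m ∈ G.fullLines H, G.I x m := fun m hm => by
    obtain ⟨a, ha, ha'⟩ := hmeet m hm l' hl'
    obtain ⟨b, hb, hb'⟩ := hmeet m hm l hl
    exact hG.incident_of_meets hne hxl' hxl ha ha' hb hb'
  refine ⟨x, subset_antisymm (fun p hp => ?_) (hH.perp_subset hG hthick hl hx)⟩
  obtain ⟨m, hm, hpm⟩ := hH.fullLinesThrough_nonempty hG hl hp
  exact ⟨m, hx m hm, hpm⟩

theorem ncard_fullLinesThrough_le [Finite G.L] (hG : G.IsGQ) (hH : G.IsGeomHyperplane H)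
    {p q : G.P} (hq : q ∈ H) (hpq : ¬ G.Collin p q) :
    (G.fullLinesThrough H p).ncard ≤ (G.fullLinesThrough H q).ncard := by
  have hproj : ∀ l ∈ G.fullLinesThrough H p,
      ∃ m ∈ G.fullLinesThrough H q, ∃ r, G.I r l ∧ G.I r m := by
    rintro l ⟨hl, hpl⟩
    have hql : ¬ G.I q l := fun hql => hpq ⟨l, hpl, hql⟩
    obtain ⟨r, hrl, m, hqm, hrm⟩ := hG.exists_collin hql
    exact ⟨m, ⟨hH.mem_fullLines (hl r hrl) hq (by rintro rfl; exact hql hrl) hrm hqm, hqm⟩,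
      r, hrl, hrm⟩
  have : Nonempty G.P := ⟨q⟩
  choose! f hf r hr using hproj
  refine ncard_le_ncard_of_injOn f hf fun l₁ h₁ l₂ h₂ he => ?_
  have hpf : ¬ G.I p (f l₁) := fun h => hpq ⟨f l₁, h, (hf l₁ h₁).2⟩
  have hr₁₂ : r l₁ = r l₂ := hG.eq_of_collin hpf (hr l₁ h₁).2 ⟨l₁, h₁.2, (hr l₁ h₁).1⟩
    (he ▸ (hr l₂ h₂).2) ⟨l₂, h₂.2, (hr l₂ h₂).1⟩
  exact hG.line_eq h₁.2 (hr l₁ h₁).1 h₂.2 (hr₁₂ ▸ (hr l₂ h₂).1)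
    (by intro h; exact hpf (h ▸ (hr l₁ h₁).2))

theorem ncard_fullLinesThrough_eq [Finite G.L] (hG : G.IsGQ) (hH : G.IsGeomHyperplane H)
    {p q : G.P} (hp : p ∈ H) (hq : q ∈ H) (hpq : ¬ G.Collin p q) :
    (G.fullLinesThrough H p).ncard = (G.fullLinesThrough H q).ncard :=
  (hH.ncard_fullLinesThrough_le hG hq hpq).antisymm
    (hH.ncard_fullLinesThrough_le hG hp fun h => hpq h.symm)

theorem fullLinesThrough_eq_of_not_collin [Finite G.L] (hG : G.IsGQ)
    (hH : G.IsGeomHyperplane H) {s t : ℕ} (hord : G.HasOrder s t) {p q : G.P} (hp : p ∈ H)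
    (hq : q ∈ H) (hpq : ¬ G.Collin p q) (hall : G.fullLinesThrough H p = G.linesThrough p) :
    G.fullLinesThrough H q = G.linesThrough q :=
  eq_of_subset_of_ncard_le inter_subset_right <| by
    rw [hord.ncard_linesThrough, ← hH.ncard_fullLinesThrough_eq hG hp hq hpq, hall,
      hord.ncard_linesThrough]

theorem exists_notMem_not_collin (hG : G.IsGQ) (hH : G.IsGeomHyperplane H) (hthick : G.Thick)
    {q : G.P} (hq : q ∈ H) : ∃ z ∉ H, ¬ G.Collin z q := by
  obtain ⟨z, hz⟩ := hH.exists_notMem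
  by_cases hzq : G.Collin z q
  swap
  · exact ⟨z, hz, hzq⟩
  obtain ⟨m, hzm, hqm⟩ := hzq
  obtain ⟨m', hzm', hne⟩ := hthick.exists_incident_ne z m
  obtain ⟨w, ⟨hw, hwm'⟩, hwu⟩ := hH.existsUnique_mem hz hzm'
  obtain ⟨a, ham', haz, haw⟩ := hthick.exists_incident_ne_ne m' z w
  have hqm' : ¬ G.I q m' := fun h =>
    hne (hG.line_eq hzm' h hzm hqm (ne_of_mem_of_not_mem hq hz).symm)
  refine ⟨a, fun ha => haw (hwu a ⟨ha, ham'⟩), fun haq => haz ?_⟩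
  exact hG.eq_of_collin hqm' ham' haq.symm hzm' ⟨m, hqm, hzm⟩

/-- The points of `ℓ` not collinear with `p` would inherit from `p` the property that all their
lines lie in `H`, which forces every point outside `H` to be collinear with the projection of `p`
onto `ℓ`. -/
theorem fullLinesThrough_ne_linesThrough [Finite G.L] (hG : G.IsGQ)
    (hH : G.IsGeomHyperplane H) (hthick : G.Thick) {s t : ℕ} (hord : G.HasOrder s t)
    {p : G.P} (hp : p ∈ H) {ℓ : G.L} (hℓ : ℓ ∈ G.fullLines H) (hpℓ : ¬ G.I p ℓ) :
    G.fullLinesThrough H p ≠ G.linesThrough p := by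
  intro hall
  obtain ⟨q, hqℓ, hpq⟩ := hG.exists_collin hpℓ
  obtain ⟨z, hz, hzq⟩ := hH.exists_notMem_not_collin hG hthick (hℓ q hqℓ)
  obtain ⟨o, hoℓ, k, hzk, hok⟩ := hG.exists_collin fun hzℓ => hz (hℓ z hzℓ)
  have hpo : ¬ G.Collin p o := by
    intro hpo
    obtain rfl := hG.eq_of_collin hpℓ hoℓ hpo hqℓ hpq
    exact hzq ⟨k, hzk, hok⟩
  have hk : k ∈ G.fullLinesThrough H o := by
    rw [hH.fullLinesThrough_eq_of_not_collin hG hord hp (hℓ o hoℓ) hpo hall]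
    exact hok
  exact hz (hk.1 z hzk)

theorem ncard_fullLinesThrough_lt [Finite G.L] (hG : G.IsGQ) (hH : G.IsGeomHyperplane H)
    (hthick : G.Thick) {s t : ℕ} (hord : G.HasOrder s t) {p : G.P} (hp : p ∈ H) {ℓ : G.L}
    (hℓ : ℓ ∈ G.fullLines H) (hpℓ : ¬ G.I p ℓ) : (G.fullLinesThrough H p).ncard < t + 1 := by
  rw [← hord.ncard_linesThrough p]
  exact ncard_lt_ncard <| inter_subset_right.ssubset_of_ne <|
    hH.fullLinesThrough_ne_linesThrough hG hthick hord hp hℓ hpℓ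

theorem exists_mem_inter_perp_not_collin [Finite G.L] (hG : G.IsGQ)
    (hH : G.IsGeomHyperplane H) {s t : ℕ} (hord : G.HasOrder s t) {z p : G.P} (hz : z ∉ H)
    (hp : p ∈ H) (hpz : p ∉ G.perp z) (hlt : (G.fullLinesThrough H p).ncard < t + 1) :
    ∃ o ∈ H ∩ G.perp z, ¬ G.Collin p o := by
  by_contra! hall
  obtain ⟨l₀, -⟩ : (G.linesThrough p).Nonempty :=
    nonempty_of_ncard_ne_zero (by rw [hord.ncard_linesThrough]; omega)
  have : Nonempty G.L := ⟨l₀⟩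
  choose! f hpf hof using hall
  refine hlt.not_ge ?_
  rw [← hH.ncard_inter_perp hG hord hz]
  refine ncard_le_ncard_of_injOn f (fun o ho => ⟨hH.mem_fullLines hp ho.1
    (by rintro rfl; exact hpz ho.2) (hpf o ho) (hof o ho), hpf o ho⟩) fun o₁ h₁ o₂ h₂ he => ?_
  by_contra hne
  exact hH.not_collin_of_mem_inter_perp hG hz h₁ h₂ hne ⟨f o₁, hof o₁ h₁, he ▸ hof o₂ h₂⟩

theorem exists_ncard_fullLinesThrough_eq [Finite G.L] (hG : G.IsGQ)
    (hH : G.IsGeomHyperplane H) (hthick : G.Thick) {s t : ℕ} (hord : G.HasOrder s t)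
    {d₁ d₂ : G.L} (hd₁ : d₁ ∈ G.fullLines H) (hd₂ : d₂ ∈ G.fullLines H)
    (hd : ∀ p, G.I p d₁ → ¬ G.I p d₂) :
    ∃ c, ∀ p ∈ H, (G.fullLinesThrough H p).ncard = c := by
  have hlt : ∀ p ∈ H, (G.fullLinesThrough H p).ncard < t + 1 := fun p hp => by
    by_cases hpd : G.I p d₁
    · exact hH.ncard_fullLinesThrough_lt hG hthick hord hp hd₂ (hd p hpd)
    · exact hH.ncard_fullLinesThrough_lt hG hthick hord hp hd₁ hpd
  obtain ⟨z, hz⟩ := hH.exists_notMem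
  obtain ⟨o₀, ho₀⟩ : (H ∩ G.perp z).Nonempty :=
    nonempty_of_ncard_ne_zero (by rw [hH.ncard_inter_perp hG hord hz]; omega)
  have hO : ∀ o ∈ H ∩ G.perp z,
      (G.fullLinesThrough H o).ncard = (G.fullLinesThrough H o₀).ncard := fun o ho => by
    rcases eq_or_ne o o₀ with rfl | hne
    · rfl
    · exact hH.ncard_fullLinesThrough_eq hG ho.1 ho₀.1
        (hH.not_collin_of_mem_inter_perp hG hz ho ho₀ hne)
  refine ⟨(G.fullLinesThrough H o₀).ncard, fun p hp => ?_⟩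
  by_cases hpz : p ∈ G.perp z
  · exact hO p ⟨hp, hpz⟩
  obtain ⟨o, ho, hpo⟩ := hH.exists_mem_inter_perp_not_collin hG hord hz hp hpz (hlt p hp)
  rw [hH.ncard_fullLinesThrough_eq hG hp ho.1 hpo, hO o ho]

theorem ncard_inter_perp_sdiff_of_mem [Finite G.P] [Finite G.L] (hG : G.IsGQ)
    (hH : G.IsGeomHyperplane H) {s t : ℕ} (hord : G.HasOrder s t) {q : G.P} {l : G.L}
    (hq : q ∈ H) (hql : G.I q l) :
    ((H ∩ G.perp q) \ G.pointsOn l).ncard = (G.fullLinesThrough H q \ {l}).ncard * s := by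
  rw [← hG.ncard_biUnion_pointsOn_sdiff hord fun m hm => hm.1.2]
  congr 1
  ext p
  simp only [mem_iUnion, exists_prop]
  constructor
  · rintro ⟨⟨hp, m, hqm, hpm⟩, hpl⟩
    have hpq : p ≠ q := by rintro rfl; exact hpl hql
    exact ⟨m, ⟨⟨hH.mem_fullLines hp hq hpq hpm hqm, hqm⟩, by rintro rfl; exact hpl hpm⟩,
      hpm, hpq⟩
  · rintro ⟨m, ⟨⟨hm, hqm⟩, hml⟩, hpm, hpq⟩
    exact ⟨⟨hm p hpm, m, hqm, hpm⟩, fun hpl => hml (hG.line_eq hpm hqm hpl hql hpq)⟩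

theorem inter_perp_sdiff_of_notMem (hH : G.IsGeomHyperplane H) {q w : G.P} {l : G.L}
    (hq : q ∉ H) (hql : G.I q l) (hw : w ∈ H) (hwl : G.I w l) :
    (H ∩ G.perp q) \ G.pointsOn l = (H ∩ G.perp q) \ {w} := by
  obtain ⟨_, -, hu⟩ := hH.existsUnique_mem hq hql
  ext p
  refine ⟨fun ⟨hp, hpl⟩ => ⟨hp, fun e => hpl (e ▸ hwl)⟩, fun ⟨hp, hpw⟩ => ⟨hp, fun hpl => hpw ?_⟩⟩
  exact (hu p ⟨hp.1, hpl⟩).trans (hu w ⟨hw, hwl⟩).symm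

theorem ncard_eq_of_mem_fullLines [Finite G.P] [Finite G.L] (hG : G.IsGQ)
    (hH : G.IsGeomHyperplane H) {s t c : ℕ} (hord : G.HasOrder s t)
    (hc : ∀ p ∈ H, (G.fullLinesThrough H p).ncard = c + 1) {d : G.L} (hd : d ∈ G.fullLines H) :
    H.ncard = (s + 1) + (s + 1) * (c * s) := by
  have hfiber : ∀ q ∈ G.pointsOn d, ((H ∩ G.perp q) \ G.pointsOn d).ncard = c * s :=
    fun q hq => by
      rw [hH.ncard_inter_perp_sdiff_of_mem hG hord (hd q hq) hq,
        ncard_sdiff_singleton_of_mem (show d ∈ G.fullLinesThrough H q from ⟨hd, hq⟩),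
        hc q (hd q hq), Nat.add_sub_cancel]
  rw [hG.ncard_eq_add_finsum H d, inter_eq_right.2 (show G.pointsOn d ⊆ H from hd),
    finsum_mem_congr rfl hfiber, finsum_mem_const_eq_ncard_mul, hord.ncard_pointsOn]

theorem ncard_eq_of_notMem [Finite G.P] [Finite G.L] (hG : G.IsGQ)
    (hH : G.IsGeomHyperplane H) {s t c : ℕ} (hord : G.HasOrder s t)
    (hc : ∀ p ∈ H, (G.fullLinesThrough H p).ncard = c + 1) {z : G.P} {m : G.L} (hz : z ∉ H)
    (hzm : G.I z m) : H.ncard = 1 + ((c + 1) * s + s * t) := by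
  obtain ⟨w, ⟨hw, hwm⟩, hwu⟩ := hH.existsUnique_mem hz hzm
  have hinter : H ∩ G.pointsOn m = {w} :=
    eq_singleton_iff_unique_mem.2 ⟨⟨hw, hwm⟩, hwu⟩
  have hfiber_w : ((H ∩ G.perp w) \ G.pointsOn m).ncard = (c + 1) * s := by
    rw [hH.ncard_inter_perp_sdiff_of_mem hG hord hw hwm,
      sdiff_singleton_eq_self fun h => hz (h.1 z hzm), hc w hw]
  have hfiber : ∀ q ∈ G.pointsOn m \ {w}, ((H ∩ G.perp q) \ G.pointsOn m).ncard = t :=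
    fun q hq => by
      have hqH : q ∉ H := fun h => hq.2 (hwu q ⟨h, hq.1⟩)
      rw [hH.inter_perp_sdiff_of_notMem hqH hq.1 hw hwm,
        ncard_sdiff_singleton_of_mem (show w ∈ H ∩ G.perp q from ⟨hw, m, hq.1, hwm⟩),
        hH.ncard_inter_perp hG hord hqH, Nat.add_sub_cancel]
  have hsplit := finsum_mem_insert (fun q => ((H ∩ G.perp q) \ G.pointsOn m).ncard)
    (notMem_sdiff_of_mem (mem_singleton w)) (toFinite (G.pointsOn m \ {w}))
  rw [insert_sdiff_self_of_mem (show w ∈ G.pointsOn m from hwm)] at hsplit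
  rw [hG.ncard_eq_add_finsum H m, hinter, ncard_singleton, hsplit, hfiber_w,
    finsum_mem_congr rfl hfiber, finsum_mem_const_eq_ncard_mul,
    ncard_sdiff_singleton_of_mem (show w ∈ G.pointsOn m from hwm), hord.ncard_pointsOn,
    Nat.add_sub_cancel]

theorem exists_subquadrangle [Finite G.P] [Finite G.L] (hG : G.IsGQ)
    (hH : G.IsGeomHyperplane H) (hthick : G.Thick) {s t : ℕ} (hord : G.HasOrder s t)
    (hs : 0 < s) {d₁ d₂ : G.L} (hd₁ : d₁ ∈ G.fullLines H) (hd₂ : d₂ ∈ G.fullLines H)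
    (hd : ∀ p, G.I p d₁ → ¬ G.I p d₂) :
    ∃ t', t = s * t' ∧ (G.restrict H (G.fullLines H)).IsGQ ∧
      (G.restrict H (G.fullLines H)).HasOrder s t' := by
  obtain ⟨c, hc⟩ := hH.exists_ncard_fullLinesThrough_eq hG hthick hord hd₁ hd₂ hd
  obtain ⟨q, -, -, -, -, -, hq, -, -⟩ := hthick.2 d₁
  obtain ⟨c, rfl⟩ : ∃ c', c = c' + 1 :=
    Nat.exists_eq_add_one.2 (hc q (hd₁ q hq) ▸ (ncard_pos).2 ⟨d₁, hd₁, hq⟩)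
  obtain ⟨z, hz⟩ := hH.exists_notMem
  obtain ⟨m, -, -, -, -, -, hzm, -, -⟩ := hthick.1 z
  have hcount := (hH.ncard_eq_of_mem_fullLines hG hord hc hd₁).symm.trans
    (hH.ncard_eq_of_notMem hG hord hc hz hzm)
  refine ⟨c, Nat.eq_of_mul_eq_mul_left hs ?_, hH.isGQ_restrict hG, hord.restrict_fullLines hc⟩
  linarith

end IsGeomHyperplane

end IncGeom

theorem stmt_18_general (S : IncGeom) (s t : ℕ) (hs : 2 ≤ s)
    (hfinP : Finite S.P) (hfinL : Finite S.L)
    (hS : S.IsGQ) (hSthick : S.Thick) (hSord : S.HasOrder s t)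
    (H : Set S.P) (hH : S.IsGeomHyperplane H) :
    (∀ l : S.L, ∃! p : S.P, p ∈ H ∧ S.I p l) ∨
    (∃ x : S.P, H = S.perp x) ∨
    (∃ t' : ℕ, t = s * t' ∧
      (S.restrict H {l | ∀ p : S.P, S.I p l → p ∈ H}).IsGQ ∧
      (S.restrict H {l | ∀ p : S.P, S.I p l → p ∈ H}).HasOrder s t') := by
  by_cases hfull : ∃ l, l ∈ S.fullLines H
  · obtain ⟨l, hl⟩ := hfull
    by_cases hdisj : ∃ d₁ ∈ S.fullLines H, ∃ d₂ ∈ S.fullLines H, ∀ p, S.I p d₁ → ¬ S.I p d₂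
    · obtain ⟨d₁, hd₁, d₂, hd₂, hd⟩ := hdisj
      exact Or.inr (Or.inr (hH.exists_subquadrangle hS hSthick hSord (by omega) hd₁ hd₂ hd))
    · push Not at hdisj
      exact Or.inr (Or.inl (hH.exists_eq_perp hS hSthick hl hdisj))
  · push Not at hfull
    exact Or.inl fun l => (hH.2 l).resolve_right (hfull l)

/-- A geometrical hyperplane of a finite thick generalized quadrangle of order (s,t)
is an ovoid, the perp of a point, or a subquadrangle of order (s, t/s). -/
theorem stmt_18 (S : IncGeom) (s t : ℕ) (hs : 2 ≤ s) (ht : 2 ≤ t)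
    (hfinP : Finite S.P) (hfinL : Finite S.L)
    (hS : S.IsGQ) (hSthick : S.Thick) (hSord : S.HasOrder s t)
    (H : Set S.P) (hH : S.IsGeomHyperplane H) :
    (∀ l : S.L, ∃! p : S.P, p ∈ H ∧ S.I p l) ∨
    (∃ x : S.P, H = S.perp x) ∨
    (∃ t' : ℕ, t = s * t' ∧
      (S.restrict H {l | ∀ p : S.P, S.I p l → p ∈ H}).IsGQ ∧
      (S.restrict H {l | ∀ p : S.P, S.I p l → p ∈ H}).HasOrder s t') :=
  stmt_18_general S s t hs hfinP hfinL hS hSthick hSord H hH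
end
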